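/- arXiv:1702.04589 — 10 statements merged into one kernel-verified Lean document; each statement's English description precedes it below -/
import Mathlib

section
/- Fix N, s ≥ 1, Δt > 0, nonnegative weights b_1,…,b_s, positive reals σ_1,…,σ_N, a vector yⁿ ∈ ℝ^N, and for each k = 1,…,s nonnegative reals p_{ij}^{(k)}, d_{ij}^{(k)} (1 ≤ i,j ≤ N) satisfying p_{ij}^{(k)} = d_{ji}^{(k)} for all i,j. If Y ∈ ℝ^N satisfies Y_i = yⁿ_i + Δt Σ_{k=1}^s b_k Σ_{j=1}^N ( p_{ij}^{(k)}·Y_j/σ_j − d_{ij}^{(k)}·Y_i/σ_i ) for all i = 1,…,N, then Σ_{i=1}^N Y_i = Σ_{i=1}^N yⁿ_i. (The update step of a modified Patankar–Runge–Kutta scheme applied to a conservative production–destruction system is unconditionally conservative.) -/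
theorem stmt_2 (N s : ℕ) (hN : 1 ≤ N) (hs : 1 ≤ s)
    (Δt : ℝ) (hΔt : 0 < Δt)
    (b : Fin s → ℝ) (hb : ∀ k, 0 ≤ b k)
    (σ : Fin N → ℝ) (hσ : ∀ i, 0 < σ i)
    (yn : Fin N → ℝ)
    (p d : Fin s → Fin N → Fin N → ℝ)
    (hp : ∀ k i j, 0 ≤ p k i j) (hd : ∀ k i j, 0 ≤ d k i j)
    (hcons : ∀ k i j, p k i j = d k j i)
    (Y : Fin N → ℝ)
    (hY : ∀ i, Y i = yn i + Δt * ∑ k, b k * ∑ j,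
      (p k i j * Y j / σ j - d k i j * Y i / σ i)) :
    ∑ i, Y i = ∑ i, yn i := by
  have key : ∀ k : Fin s,
      ∑ i, ∑ j, (p k i j * Y j / σ j - d k i j * Y i / σ i) = 0 := by
    intro k
    simp only [Finset.sum_sub_distrib, hcons]
    have h : ∑ i : Fin N, ∑ j : Fin N, d k j i * Y j / σ j
        = ∑ i : Fin N, ∑ j : Fin N, d k i j * Y i / σ i := Finset.sum_comm
    rw [h, sub_self]
  have h2 : ∑ i, (Δt * ∑ k, b k * ∑ j,
      (p k i j * Y j / σ j - d k i j * Y i / σ i)) = 0 := by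
    rw [← Finset.mul_sum, Finset.sum_comm]
    have : ∀ k : Fin s, ∑ i, b k * ∑ j,
        (p k i j * Y j / σ j - d k i j * Y i / σ i) = 0 := by
      intro k
      rw [← Finset.mul_sum, key, mul_zero]
    rw [Finset.sum_congr rfl fun k _ => this k]
    simp
  calc ∑ i, Y i
      = ∑ i, (yn i + Δt * ∑ k, b k * ∑ j,
          (p k i j * Y j / σ j - d k i j * Y i / σ i)) :=
        Finset.sum_congr rfl fun i _ => hY i
    _ = ∑ i, yn i := by rw [Finset.sum_add_distrib, h2, add_zero]
end

section
/- Each column of the MPRK system matrix M sums to one: for every j = 1,…,N one has Σ_{i=1}^N m_{ij} = 1; equivalently, eᵀM = eᵀ where e = (1,…,1)ᵀ ∈ ℝ^N. -/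
theorem stmt_4 (N s : ℕ) (hN : 1 ≤ N) (hs : 1 ≤ s)
    (Δt : ℝ) (hΔt : 0 < Δt)
    (b : Fin s → ℝ) (hb : ∀ k, 0 ≤ b k)
    (σ : Fin N → ℝ) (hσ : ∀ i, 0 < σ i)
    (p d : Fin s → Fin N → Fin N → ℝ)
    (hp : ∀ k i j, 0 ≤ p k i j) (hd : ∀ k i j, 0 ≤ d k i j)
    (hcons : ∀ k i j, p k i j = d k j i)
    (hpdiag : ∀ k i, p k i i = 0) (hddiag : ∀ k i, d k i i = 0)
    (M : Matrix (Fin N) (Fin N) ℝ)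
    (hMdiag : ∀ i, M i i = 1 + Δt * ∑ k, b k * ∑ j, d k i j / σ i)
    (hMoff : ∀ i j, i ≠ j → M i j = -(Δt * ∑ k, b k * p k i j / σ j)) :
    ∀ j, ∑ i, M i j = 1 := by
  intro j
  rw [← Finset.add_sum_erase _ _ (Finset.mem_univ j), hMdiag j]
  have h2 : ∑ i ∈ Finset.univ.erase j, M i j
      = -(Δt * ∑ k, b k * ∑ i, p k i j / σ j) := by
    rw [Finset.sum_congr rfl (fun i hi => hMoff i j (Finset.ne_of_mem_erase hi)),
      Finset.sum_neg_distrib]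
    congr 1
    rw [Finset.sum_erase _ (by simp [hpdiag])]
    rw [Finset.mul_sum]
    simp only [Finset.mul_sum, Finset.sum_div]
    rw [Finset.sum_comm]
    simp [mul_div_assoc]
  rw [h2]
  have : ∀ k i, p k i j = d k j i := fun k i => hcons k i j
  simp only [this]
  simp only [div_eq_mul_inv]
  ring
end

section
/- The transpose of the MPRK system matrix M is strictly diagonally dominant: for every i = 1,…,N one has |m_{ii}| > Σ_{j≠i} |m_{ji}|. -/
theorem stmt_5 (N s : ℕ) (hN : 1 ≤ N) (hs : 1 ≤ s)
    (Δt : ℝ) (hΔt : 0 < Δt)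
    (b : Fin s → ℝ) (hb : ∀ k, 0 ≤ b k)
    (σ : Fin N → ℝ) (hσ : ∀ i, 0 < σ i)
    (p d : Fin s → Fin N → Fin N → ℝ)
    (hp : ∀ k i j, 0 ≤ p k i j) (hd : ∀ k i j, 0 ≤ d k i j)
    (hcons : ∀ k i j, p k i j = d k j i)
    (hpdiag : ∀ k i, p k i i = 0) (hddiag : ∀ k i, d k i i = 0)
    (M : Matrix (Fin N) (Fin N) ℝ)
    (hMdiag : ∀ i, M i i = 1 + Δt * ∑ k, b k * ∑ j, d k i j / σ i)
    (hMoff : ∀ i j, i ≠ j → M i j = -(Δt * ∑ k, b k * p k i j / σ j)) :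
    ∀ i, ∑ j ∈ Finset.univ.erase i, |M j i| < |M i i| := by
  intro i
  have hσi := hσ i
  have hsum : ∀ k, (0:ℝ) ≤ ∑ j, d k i j / σ i := fun k =>
    Finset.sum_nonneg fun j _ => div_nonneg (hd k i j) hσi.le
  have hS : (0:ℝ) ≤ Δt * ∑ k, b k * ∑ j, d k i j / σ i :=
    mul_nonneg hΔt.le (Finset.sum_nonneg fun k _ => mul_nonneg (hb k) (hsum k))
  have key : ∀ j ∈ Finset.univ.erase i, |M j i| = Δt * ∑ k, b k * (d k i j / σ i) := by
    intro j hj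
    have hji : j ≠ i := Finset.ne_of_mem_erase hj
    rw [hMoff j i hji, abs_neg, abs_of_nonneg]
    · congr 1
      exact Finset.sum_congr rfl fun k _ => by rw [hcons k j i]; ring
    · exact mul_nonneg hΔt.le (Finset.sum_nonneg fun k _ =>
        div_nonneg (mul_nonneg (hb k) (hp k j i)) hσi.le)
  rw [Finset.sum_congr rfl key, hMdiag i, abs_of_nonneg (by linarith)]
  have heq : ∑ j ∈ Finset.univ.erase i, Δt * ∑ k, b k * (d k i j / σ i)
      = Δt * ∑ k, b k * ∑ j, d k i j / σ i := by
    rw [← Finset.mul_sum, Finset.sum_comm]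
    congr 1
    refine Finset.sum_congr rfl fun k _ => ?_
    rw [← Finset.mul_sum]
    congr 1
    exact Finset.sum_erase _ (by simp [hddiag k i])
  rw [heq]
  linarith
end

section
/- The MPRK system matrix M is invertible, every entry of M⁻¹ is nonnegative, and consequently for every yⁿ ∈ ℝ^N with all components positive the unique solution Y of M·Y = yⁿ has all components positive. (A modified Patankar–Runge–Kutta scheme is unconditionally positive.) -/
open Matrix

-- key minimum-principle lemma
theorem key_lemma {N : ℕ} (A : Matrix (Fin N) (Fin N) ℝ)
    (hoff : ∀ i j, i ≠ j → A i j ≤ 0)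
    (hrow : ∀ i, 0 < ∑ j, A i j)
    (z c : Fin N → ℝ) (hAz : A.mulVec z = c) (hc : ∀ i, 0 ≤ c i) :
    ∀ i, 0 ≤ z i := by
  by_contra h
  push_neg at h
  obtain ⟨i0, hi0⟩ := h
  obtain ⟨j0, -, hj0⟩ := Finset.exists_min_image Finset.univ z ⟨i0, Finset.mem_univ i0⟩
  have hzj0 : z j0 < 0 := lt_of_le_of_lt (hj0 i0 (Finset.mem_univ i0)) hi0
  have hc0 : c j0 = ∑ j, A j0 j * z j := by
    rw [← hAz]; simp [Matrix.mulVec, dotProduct]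
  have hle : ∑ j, A j0 j * z j ≤ ∑ j, A j0 j * z j0 := by
    apply Finset.sum_le_sum
    intro j _
    rcases eq_or_ne j j0 with rfl | hne
    · exact le_refl _
    · exact mul_le_mul_of_nonpos_left (hj0 j (Finset.mem_univ j)) (hoff j0 j (Ne.symm hne))
  have : c j0 < 0 := by
    calc c j0 ≤ ∑ j, A j0 j * z j0 := hc0 ▸ hle
    _ = (∑ j, A j0 j) * z j0 := by rw [Finset.sum_mul]
    _ < 0 := mul_neg_of_pos_of_neg (hrow j0) hzj0
  exact absurd (hc j0) (not_le.mpr this)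



theorem stmt_6 (N s : ℕ) (hN : 1 ≤ N) (hs : 1 ≤ s)
    (Δt : ℝ) (hΔt : 0 < Δt)
    (b : Fin s → ℝ) (hb : ∀ k, 0 ≤ b k)
    (σ : Fin N → ℝ) (hσ : ∀ i, 0 < σ i)
    (p d : Fin s → Fin N → Fin N → ℝ)
    (hp : ∀ k i j, 0 ≤ p k i j) (hd : ∀ k i j, 0 ≤ d k i j)
    (hcons : ∀ k i j, p k i j = d k j i)
    (hpdiag : ∀ k i, p k i i = 0) (hddiag : ∀ k i, d k i i = 0)
    (M : Matrix (Fin N) (Fin N) ℝ)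
    (hMdiag : ∀ i, M i i = 1 + Δt * ∑ k, b k * ∑ j, d k i j / σ i)
    (hMoff : ∀ i j, i ≠ j → M i j = -(Δt * ∑ k, b k * p k i j / σ j)) :
    IsUnit M ∧ (∀ i j, 0 ≤ M⁻¹ i j) ∧
      ∀ yn : Fin N → ℝ, (∀ i, 0 < yn i) →
        ∀ Y : Fin N → ℝ, M.mulVec Y = yn → ∀ i, 0 < Y i := by
  -- transpose properties
  have hToff : ∀ i j, i ≠ j → Mᵀ i j ≤ 0 := by
    intro i j hij
    rw [Matrix.transpose_apply, hMoff j i (Ne.symm hij)]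
    simp only [neg_nonpos]
    apply mul_nonneg hΔt.le
    apply Finset.sum_nonneg
    intro k _
    exact div_nonneg (mul_nonneg (hb k) (hp k j i)) (hσ i).le
  have hTrow : ∀ i, ∑ j, Mᵀ i j = 1 := by
    intro i
    have herase : ∑ j ∈ Finset.univ.erase i, Mᵀ i j
        = -(Δt * ∑ k, b k * ∑ j, d k i j / σ i) := by
      have h1 : ∀ j ∈ Finset.univ.erase i, Mᵀ i j
          = -(Δt * ∑ k, b k * d k i j / σ i) := by
        intro j hj
        have hji : j ≠ i := Finset.ne_of_mem_erase hj
        rw [Matrix.transpose_apply, hMoff j i hji]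
        congr 1
        congr 1
        apply Finset.sum_congr rfl
        intro k _
        rw [hcons k j i]
      rw [Finset.sum_congr rfl h1, Finset.sum_neg_distrib, ← Finset.mul_sum]
      congr 2
      rw [Finset.sum_comm]
      apply Finset.sum_congr rfl
      intro k _
      calc ∑ x ∈ Finset.univ.erase i, b k * d k i x / σ i
          = ∑ x : Fin N, b k * d k i x / σ i :=
            Finset.sum_erase _ (by simp [hddiag])
        _ = b k * ∑ j, d k i j / σ i := by
            rw [Finset.mul_sum]
            exact Finset.sum_congr rfl (fun j _ => mul_div_assoc _ _ _)
    have h2 := Finset.add_sum_erase Finset.univ (Mᵀ i) (Finset.mem_univ i)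
    rw [← h2, herase, Matrix.transpose_apply, hMdiag i]
    ring
  have hTrowpos : ∀ i, 0 < ∑ j, Mᵀ i j := fun i => by rw [hTrow i]; norm_num
  have hnonneg_of : ∀ z c : Fin N → ℝ, Mᵀ.mulVec z = c → (∀ i, 0 ≤ c i) → ∀ i, 0 ≤ z i :=
    fun z c h hc => key_lemma Mᵀ hToff hTrowpos z c h hc
  have hdetT : Mᵀ.det ≠ 0 := by
    intro h0
    obtain ⟨v, hv, hMv⟩ := (Matrix.exists_mulVec_eq_zero_iff).mpr h0
    apply hv
    funext i
    have h1 := hnonneg_of v 0 hMv (fun i => le_refl 0)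
    have h2 : Mᵀ.mulVec (-v) = 0 := by rw [Matrix.mulVec_neg, hMv, neg_zero]
    have h3 := hnonneg_of (-v) 0 h2 (fun i => le_refl 0)
    have h4 : v i ≤ 0 := by have := h3 i; simpa using this
    exact le_antisymm h4 (h1 i)
  have hTunit : IsUnit Mᵀ.det := isUnit_iff_ne_zero.mpr hdetT
  have hdet : IsUnit M.det := by rw [← Matrix.det_transpose]; exact hTunit
  have hM : IsUnit M := (Matrix.isUnit_iff_isUnit_det M).mpr hdet
  have hinv : ∀ i j, 0 ≤ M⁻¹ i j := by
    intro i j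
    set z := (Mᵀ)⁻¹.mulVec (Pi.single i 1) with hz
    have hMz : Mᵀ.mulVec z = Pi.single i 1 := by
      rw [hz, Matrix.mulVec_mulVec, Matrix.mul_nonsing_inv _ hTunit, Matrix.one_mulVec]
    have hznn := hnonneg_of z (Pi.single i 1) hMz (fun k => by
      rw [Pi.single_apply]; split <;> norm_num)
    have hzj : z j = M⁻¹ i j := by
      rw [hz]
      have : (Mᵀ)⁻¹.mulVec (Pi.single i 1) j = (Mᵀ)⁻¹ j i := by
        simp [Matrix.mulVec, dotProduct, Pi.single_apply]
      rw [this, ← Matrix.transpose_nonsing_inv, Matrix.transpose_apply]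
    rw [← hzj]
    exact hznn j
  refine ⟨hM, hinv, ?_⟩
  intro yn hyn Y hMY i
  have hY : Y = M⁻¹.mulVec yn := by
    rw [← hMY, Matrix.mulVec_mulVec, Matrix.nonsing_inv_mul _ hdet, Matrix.one_mulVec]
  have hrowex : ∃ j, 0 < M⁻¹ i j := by
    by_contra h
    push_neg at h
    have hz0 : ∀ j, M⁻¹ i j = 0 := fun j => le_antisymm (h j) (hinv i j)
    have h1 : (M⁻¹ * M) i i = 1 := by rw [Matrix.nonsing_inv_mul _ hdet]; simp
    rw [Matrix.mul_apply] at h1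
    simp [hz0] at h1
  obtain ⟨j0, hj0⟩ := hrowex
  have : Y i = ∑ j, M⁻¹ i j * yn j := by
    rw [hY]; simp [Matrix.mulVec, dotProduct]
  rw [this]
  exact Finset.sum_pos' (fun j _ => mul_nonneg (hinv i j) (hyn j).le)
    ⟨j0, Finset.mem_univ j0, mul_pos hj0 (hyn j0)⟩
end

section
/- Every entry of the inverse of the MPRK system matrix lies in the unit interval: writing M⁻¹ = (m̃_{ij}), one has 0 ≤ m̃_{ij} ≤ 1 for all i, j = 1,…,N. -/
theorem stmt_7 (N s : ℕ) (hN : 1 ≤ N) (hs : 1 ≤ s)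
    (Δt : ℝ) (hΔt : 0 < Δt)
    (b : Fin s → ℝ) (hb : ∀ k, 0 ≤ b k)
    (σ : Fin N → ℝ) (hσ : ∀ i, 0 < σ i)
    (p d : Fin s → Fin N → Fin N → ℝ)
    (hp : ∀ k i j, 0 ≤ p k i j) (hd : ∀ k i j, 0 ≤ d k i j)
    (hcons : ∀ k i j, p k i j = d k j i)
    (hpdiag : ∀ k i, p k i i = 0) (hddiag : ∀ k i, d k i i = 0)
    (M : Matrix (Fin N) (Fin N) ℝ)
    (hMdiag : ∀ i, M i i = 1 + Δt * ∑ k, b k * ∑ j, d k i j / σ i)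
    (hMoff : ∀ i j, i ≠ j → M i j = -(Δt * ∑ k, b k * p k i j / σ j)) :
    ∀ i j, 0 ≤ M⁻¹ i j ∧ M⁻¹ i j ≤ 1 := by
  by_cases hdet : IsUnit M.det
  · -- column sums of M are 1
    have colsum : ∀ j, ∑ i, M i j = 1 := by
      intro j
      rw [← Finset.add_sum_erase _ _ (Finset.mem_univ j)]
      have h1 : ∑ i ∈ Finset.univ.erase j, M i j
          = -(Δt * ∑ k, b k * ∑ i, d k j i / σ j) := by
        rw [Finset.sum_congr rfl fun i hi => hMoff i j (Finset.ne_of_mem_erase hi)]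
        rw [Finset.sum_neg_distrib, ← Finset.mul_sum, Finset.sum_comm]
        congr 2
        refine Finset.sum_congr rfl fun k _ => ?_
        simp_rw [mul_div_assoc, ← Finset.mul_sum]
        congr 1
        rw [Finset.sum_erase _ (by rw [hpdiag]; simp)]
        exact Finset.sum_congr rfl fun i _ => by rw [hcons]
      rw [h1, hMdiag]
      ring
    -- off diagonals nonpositive
    have hoff_nonpos : ∀ i j, i ≠ j → M i j ≤ 0 := by
      intro i j hij
      rw [hMoff i j hij, neg_nonpos]
      refine mul_nonneg hΔt.le (Finset.sum_nonneg fun k _ => ?_)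
      exact div_nonneg (mul_nonneg (hb k) (hp k i j)) (hσ j).le
    have hMM : M⁻¹ * M = 1 := Matrix.nonsing_inv_mul M hdet
    have hMM' : M * M⁻¹ = 1 := Matrix.mul_nonsing_inv M hdet
    haveI : Nonempty (Fin N) := ⟨⟨0, hN⟩⟩
    -- nonnegativity of inverse entries
    have hnonneg : ∀ r i, 0 ≤ M⁻¹ r i := by
      intro r
      by_contra hneg
      push_neg at hneg
      obtain ⟨i₁, hi₁⟩ := hneg
      obtain ⟨i₀, -, hi₀min⟩ := Finset.exists_min_image Finset.univ
        (fun i => M⁻¹ r i) Finset.univ_nonempty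
      have hi₀neg : M⁻¹ r i₀ < 0 :=
        lt_of_le_of_lt (hi₀min i₁ (Finset.mem_univ _)) hi₁
      have hle : ∑ c, M⁻¹ r c * M c i₀ ≤ M⁻¹ r i₀ := by
        calc ∑ c, M⁻¹ r c * M c i₀ ≤ ∑ c, M⁻¹ r i₀ * M c i₀ := by
              refine Finset.sum_le_sum fun c _ => ?_
              rcases eq_or_ne c i₀ with rfl | hc
              · exact le_rfl
              · exact mul_le_mul_of_nonpos_right (hi₀min c (Finset.mem_univ _))
                  (hoff_nonpos c i₀ hc)
          _ = M⁻¹ r i₀ * ∑ c, M c i₀ := by rw [← Finset.mul_sum]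
          _ = M⁻¹ r i₀ := by rw [colsum, mul_one]
      have heq : ∑ c, M⁻¹ r c * M c i₀ = (1 : Matrix (Fin N) (Fin N) ℝ) r i₀ := by
        rw [← Matrix.mul_apply, hMM]
      have h0 : (0 : ℝ) ≤ (1 : Matrix (Fin N) (Fin N) ℝ) r i₀ := by
        rw [Matrix.one_apply]; split <;> norm_num
      rw [heq] at hle
      linarith
    -- column sums of inverse are 1
    have colsum_inv : ∀ j, ∑ i, M⁻¹ i j = 1 := by
      intro j
      have h2 : ∑ i, M⁻¹ i j = ∑ c, (∑ i, M i c) * M⁻¹ c j := by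
        simp [colsum]
      rw [h2]
      have h3 : ∑ c, (∑ i, M i c) * M⁻¹ c j
          = ∑ i, ∑ c, M i c * M⁻¹ c j := by
        rw [Finset.sum_comm]
        exact Finset.sum_congr rfl fun c _ => by rw [Finset.sum_mul]
      rw [h3]
      have h4 : ∀ i, ∑ c, M i c * M⁻¹ c j = (1 : Matrix (Fin N) (Fin N) ℝ) i j := by
        intro i; rw [← Matrix.mul_apply, hMM']
      rw [Finset.sum_congr rfl fun i _ => h4 i]
      simp [Matrix.one_apply]
    intro i j
    refine ⟨hnonneg i j, ?_⟩
    calc M⁻¹ i j ≤ ∑ r, M⁻¹ r j :=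
          Finset.single_le_sum (fun r _ => hnonneg r j) (Finset.mem_univ i)
      _ = 1 := colsum_inv j
  · intro i j
    rw [Matrix.nonsing_inv_apply_not_isUnit M hdet]
    simp
end

section
/- Let N ≥ 1 and let p_{ij}, d_{ij} : ℝ^N → ℝ (1 ≤ i,j ≤ N) be nonnegative, continuously differentiable functions with p_{ij}(z) = d_{ji}(z) and p_{ii}(z) = d_{ii}(z) = 0 for all z. Set P_i = Σ_j p_{ij} and D_i = Σ_j d_{ij}. Let y : [t_n, t_n + T] → ℝ^N solve y_i' = P_i(y) − D_i(y) with y(t_n) = yⁿ where all yⁿ_i > 0. Suppose σ : (0,T) → ℝ^N takes positive values with σ_i(Δt) = yⁿ_i + O(Δt) as Δt → 0⁺, and suppose Y : (0,T) → ℝ^N satisfies, for every Δt ∈ (0,T) and every i, the implicit relation Y_i(Δt) = yⁿ_i + Δt Σ_{j=1}^N ( p_{ij}(yⁿ)·Y_j(Δt)/σ_j(Δt) − d_{ij}(yⁿ)·Y_i(Δt)/σ_i(Δt) ). Then Y_i(Δt) − y_i(t_n + Δt) = O(Δt²) as Δt → 0⁺ for every i. (The one-stage MPRK scheme is first order accurate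 under the condition σ_i = yⁿ_i + O(Δt).) -/
/-!
Both the exact solution and the scheme agree with the explicit Euler step
`yⁿ + Δt (P - D)(yⁿ)` up to `O(Δt²)`. Since `P - D` is C¹, `(P - D) ∘ y` is Lipschitz on
`[tₙ, tₙ + T]`, so the solution deviates from its initial slope by `O(Δt)` over a step of
length `Δt`. For the scheme, `σ → yⁿ` keeps `1/σ` bounded, so the Patankar right-hand side is a
uniformly bounded linear function of `Y`; absorbing it gives `Y = O(1)`, hence `Y - yⁿ = O(Δt)`
and `Y - σ = O(Δt)`. The right-hand side sends `σ` itself to `(P - D)(yⁿ)`, so the scheme's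
deviation from the Euler step is `Δt` times the right-hand side applied to `Y - σ`, i.e. `O(Δt²)`.
-/

/-- `f(Δt) = O(Δt^m)` as `Δt → 0⁺`. -/
def BigOAtZero (f : ℝ → ℝ) (m : ℕ) : Prop :=
  ∃ C > 0, ∃ δ > 0, ∀ t : ℝ, 0 < t → t < δ → |f t| ≤ C * t ^ m

open Filter Topology Asymptotics Set

theorem bigOAtZero_iff_isBigO {f : ℝ → ℝ} {m : ℕ} :
    BigOAtZero f m ↔ f =O[𝓝[>] 0] (fun t => t ^ m) := by
  simp only [BigOAtZero, isBigO_iff', (nhdsGT_basis (0 : ℝ)).eventually_iff, mem_Ioo,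
    Real.norm_eq_abs, and_imp, gt_iff_lt]
  refine exists_congr fun C => and_congr_right fun _ => exists_congr fun δ =>
    and_congr_right fun _ => forall_congr' fun t => forall_congr' fun ht => ?_
  rw [abs_of_pos (pow_pos ht m)]

section EulerStep

variable {E : Type*} [NormedAddCommGroup E] [NormedSpace ℝ E]

theorem norm_sub_sub_smul_deriv_le {f f' : ℝ → E} {a b L : ℝ} (hab : a ≤ b)
    (hf : ∀ t ∈ Icc a b, HasDerivWithinAt f (f' t) (Icc a b) t)
    (hf' : ∀ t ∈ Ico a b, ‖f' t - f' a‖ ≤ L) :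
    ‖f b - f a - (b - a) • f' a‖ ≤ L * (b - a) := by
  have hg : ∀ t ∈ Icc a b,
      HasDerivWithinAt (fun s => f s - s • f' a) (f' t - f' a) (Icc a b) t := fun t ht => by
    simpa using (hf t ht).fun_sub ((hasDerivWithinAt_id t _).smul_const (f' a))
  have := norm_image_sub_le_of_norm_deriv_le_segment' hg hf' b (right_mem_Icc.2 hab)
  rwa [show f b - b • f' a - (f a - a • f' a) = f b - f a - (b - a) • f' a by
    rw [sub_smul]; abel] at this

theorem exists_norm_comp_sub_le_of_hasDerivWithinAt {F : E → E} (hF : ContDiff ℝ 1 F)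
    {y : ℝ → E} {a b : ℝ} (hy : ∀ t ∈ Icc a b, HasDerivWithinAt y (F (y t)) (Icc a b) t) :
    ∃ K ≥ 0, ∀ t ∈ Icc a b, ‖F (y t) - F (y a)‖ ≤ K * (t - a) := by
  have hyc : ContinuousOn y (Icc a b) := fun t ht => (hy t ht).continuousWithinAt
  have hFy : ∀ t ∈ Icc a b,
      HasDerivWithinAt (F ∘ y) (fderiv ℝ F (y t) (F (y t))) (Icc a b) t := fun t ht =>
    ((hF.differentiable one_ne_zero (y t)).hasFDerivAt).comp_hasDerivWithinAt t (hy t ht)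
  have hbound : ContinuousOn (fun t => ‖fderiv ℝ F (y t)‖ * ‖F (y t)‖) (Icc a b) :=
    ((hF.continuous_fderiv one_ne_zero).comp_continuousOn hyc).norm.mul
      (hF.continuous.comp_continuousOn hyc).norm
  obtain ⟨K, hK⟩ := isCompact_Icc.exists_bound_of_continuousOn hbound
  refine ⟨max K 0, le_max_right _ _, fun t ht => ?_⟩
  refine norm_image_sub_le_of_norm_deriv_le_segment' hFy (fun s hs => ?_) t ht
  have hs := hK s (Ico_subset_Icc_self hs)
  rw [Real.norm_of_nonneg (by positivity)] at hs
  exact ((fderiv ℝ F (y s)).le_opNorm _).trans (hs.trans (le_max_left _ _))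

theorem isBigO_sub_sub_smul_of_hasDerivWithinAt {F : E → E} (hF : ContDiff ℝ 1 F)
    {y : ℝ → E} {a T : ℝ} (hT : 0 < T)
    (hy : ∀ t ∈ Icc a (a + T), HasDerivWithinAt y (F (y t)) (Icc a (a + T)) t) :
    (fun h => y (a + h) - y a - h • F (y a)) =O[𝓝[>] 0] (fun h => h ^ 2) := by
  obtain ⟨K, hK, hFy⟩ := exists_norm_comp_sub_le_of_hasDerivWithinAt hF hy
  refine IsBigO.of_bound K (eventually_of_mem (Ioo_mem_nhdsGT hT) fun h ⟨h0, hT'⟩ => ?_)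
  have hsub : Icc a (a + h) ⊆ Icc a (a + T) := Icc_subset_Icc_right (by linarith)
  have := norm_sub_sub_smul_deriv_le (L := K * h) (by linarith)
    (fun t ht => (hy t (hsub ht)).mono hsub) fun t ht => by
      have := hFy t (hsub (Ico_subset_Icc_self ht))
      exact this.trans (mul_le_mul_of_nonneg_left (by linarith [ht.2]) hK)
  rw [add_sub_cancel_left] at this
  rw [Real.norm_of_nonneg (sq_nonneg h)]
  linarith

end EulerStep

section Patankar

variable {ι : Type*} [Fintype ι]

/-- With `a = p(yⁿ)` and `b = d(yⁿ)`, the MPRK step reads `Y = yⁿ + Δt • patankarRhs a b σ Y`. -/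
noncomputable def patankarRhs (a b : ι → ι → ℝ) (σ x : ι → ℝ) : ι → ℝ :=
  fun i => ∑ j, (a i j * x j / σ j - b i j * x i / σ i)

theorem patankarRhs_sub (a b : ι → ι → ℝ) (σ x x' : ι → ℝ) :
    patankarRhs a b σ (x - x') = patankarRhs a b σ x - patankarRhs a b σ x' := by
  ext i
  simp only [patankarRhs, Pi.sub_apply, ← Finset.sum_sub_distrib]
  exact Finset.sum_congr rfl fun j _ => by ring

theorem patankarRhs_self (a b : ι → ι → ℝ) {σ : ι → ℝ} (hσ : ∀ j, σ j ≠ 0) :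
    patankarRhs a b σ σ = fun i => ∑ j, (a i j - b i j) := by
  ext i
  exact Finset.sum_congr rfl fun j _ => by rw [mul_div_assoc, mul_div_assoc, div_self (hσ j),
    div_self (hσ i), mul_one, mul_one]

theorem norm_patankarRhs_le (a b : ι → ι → ℝ) (σ x : ι → ℝ) :
    ‖patankarRhs a b σ x‖ ≤ Fintype.card ι * (‖a‖ + ‖b‖) * ‖σ⁻¹‖ * ‖x‖ := by
  have entry (c : ι → ι → ℝ) (i j k : ι) : ‖c i j * x k / σ k‖ ≤ ‖c‖ * ‖σ⁻¹‖ * ‖x‖ := by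
    rw [div_eq_mul_inv, norm_mul, norm_mul, mul_right_comm]
    gcongr
    · exact (norm_le_pi_norm (c i) j).trans (norm_le_pi_norm c i)
    · exact norm_le_pi_norm σ⁻¹ k
    · exact norm_le_pi_norm x k
  refine (pi_norm_le_iff_of_nonneg (by positivity)).2 fun i => ?_
  calc ‖∑ j, (a i j * x j / σ j - b i j * x i / σ i)‖
      ≤ ∑ _j : ι, (‖a‖ + ‖b‖) * ‖σ⁻¹‖ * ‖x‖ := by
        refine (norm_sum_le _ _).trans (Finset.sum_le_sum fun j _ => ?_)
        refine (norm_sub_le _ _).trans ?_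
        linarith [entry a i j j, entry b i j i]
    _ = _ := by rw [Finset.sum_const, nsmul_eq_mul, Finset.card_univ, mul_assoc, mul_assoc,
        mul_assoc]

theorem isBigO_patankarRhs {α : Type*} {l : Filter α} (a b : ι → ι → ℝ) {σ : α → ι → ℝ}
    (hσ : (fun t => (σ t)⁻¹) =O[l] (fun _ => (1 : ℝ))) (x : α → ι → ℝ) :
    (fun t => patankarRhs a b (σ t) (x t)) =O[l] x := by
  obtain ⟨C, hC⟩ := hσ.bound
  refine IsBigO.of_bound (Fintype.card ι * (‖a‖ + ‖b‖) * C) (hC.mono fun t ht => ?_)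
  rw [norm_one, mul_one] at ht
  refine (norm_patankarRhs_le a b (σ t) (x t)).trans ?_
  gcongr

end Patankar

theorem isBigO_one_of_norm_sub_le {α E : Type*} [SeminormedAddCommGroup E] {l : Filter α}
    {x : α → E} {x₀ : E} {ε : α → ℝ} (hε : Tendsto ε l (𝓝 0))
    (hx : ∀ᶠ t in l, ‖x t - x₀‖ ≤ ε t * ‖x t‖) : x =O[l] (fun _ => (1 : ℝ)) := by
  refine IsBigO.of_bound (2 * ‖x₀‖) ((hx.and (hε.eventually (ge_mem_nhds one_half_pos))).mono
    fun t ⟨ht, hεt⟩ => ?_)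
  rw [norm_one, mul_one]
  nlinarith [norm_le_norm_add_norm_sub' (x t) x₀, norm_nonneg (x t)]

theorem isBigO_mprk_sub_sub_smul {ι : Type*} [Fintype ι] {a b : ι → ι → ℝ} {y₀ : ι → ℝ}
    (hy₀ : ∀ i, y₀ i ≠ 0) {σ Y : ℝ → ι → ℝ}
    (hσ : (fun t => σ t - y₀) =O[𝓝[>] 0] id)
    (hY : ∀ᶠ t in 𝓝[>] 0, Y t = y₀ + t • patankarRhs a b (σ t) (Y t)) :
    (fun t => Y t - y₀ - t • patankarRhs a b y₀ y₀) =O[𝓝[>] 0] (fun t => t ^ 2) := by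
  have hid : Tendsto (id : ℝ → ℝ) (𝓝[>] 0) (𝓝 0) := tendsto_nhdsWithin_of_tendsto_nhds tendsto_id
  have hσy₀ : Tendsto σ (𝓝[>] 0) (𝓝 y₀) := by
    simpa using (hσ.trans_tendsto hid).add_const y₀
  have hσinv : Tendsto (fun t => (σ t)⁻¹) (𝓝[>] 0) (𝓝 y₀⁻¹) :=
    tendsto_pi_nhds.2 fun j => (tendsto_pi_nhds.1 hσy₀ j).inv₀ (hy₀ j)
  have hσne : ∀ᶠ t in 𝓝[>] 0, ∀ j, σ t j ≠ 0 :=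
    eventually_all.2 fun j => (tendsto_pi_nhds.1 hσy₀ j).eventually_ne (hy₀ j)
  have hrhs := isBigO_patankarRhs a b (hσinv.isBigO_one ℝ)
  have hYbdd : Y =O[𝓝[>] 0] (fun _ => (1 : ℝ)) := by
    refine isBigO_one_of_norm_sub_le (x₀ := y₀)
      (ε := fun t => ‖t‖ * (Fintype.card ι * (‖a‖ + ‖b‖) * ‖(σ t)⁻¹‖)) ?_ (hY.mono fun t ht => ?_)
    · simpa using hid.norm.mul (hσinv.norm.const_mul _)
    · conv_lhs => rw [ht]
      rw [add_sub_cancel_left, norm_smul, mul_assoc]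
      exact mul_le_mul_of_nonneg_left (norm_patankarRhs_le a b _ _) (norm_nonneg t)
  have hYy₀ : (fun t => Y t - y₀) =O[𝓝[>] 0] id :=
    ((isBigO_refl id _).smul ((hrhs Y).trans hYbdd)).congr'
      (hY.mono fun t ht => by dsimp only [id]; rw [eq_sub_iff_add_eq', ← ht])
      (.of_forall fun t => by simp)
  have hYσ : (fun t => Y t - σ t) =O[𝓝[>] 0] id :=
    (hYy₀.sub hσ).congr_left fun t => by abel
  have hsplit : (fun t => t • patankarRhs a b (σ t) (Y t - σ t)) =ᶠ[𝓝[>] 0]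
      fun t => Y t - y₀ - t • patankarRhs a b y₀ y₀ := by
    filter_upwards [hY, hσne] with t hYt hσt
    rw [patankarRhs_sub, patankarRhs_self a b hσt, patankarRhs_self a b hy₀, smul_sub]
    conv_rhs => rw [hYt]
    rw [add_sub_cancel_left]
  exact ((isBigO_refl id _).smul ((hrhs _).trans hYσ)).congr' hsplit
    (Eventually.of_forall fun t => by simp [sq])

theorem stmt_10_general (N : ℕ)
    (p d : Fin N → Fin N → (Fin N → ℝ) → ℝ)
    (hpC1 : ∀ i j, ContDiff ℝ 1 (p i j)) (hdC1 : ∀ i j, ContDiff ℝ 1 (d i j))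
    (P D : Fin N → (Fin N → ℝ) → ℝ)
    (hP : ∀ i z, P i z = ∑ j, p i j z) (hD : ∀ i z, D i z = ∑ j, d i j z)
    (tn T : ℝ) (hT : 0 < T)
    (y : ℝ → Fin N → ℝ)
    (hy : ∀ (i : Fin N), ∀ t ∈ Set.Icc tn (tn + T),
      HasDerivWithinAt (fun s => y s i) (P i (y t) - D i (y t)) (Set.Icc tn (tn + T)) t)
    (yn : Fin N → ℝ) (hyn : y tn = yn) (hynpos : ∀ i, 0 < yn i)
    (σ : ℝ → Fin N → ℝ)
    (hσO : ∀ i, BigOAtZero (fun Δt => σ Δt i - yn i) 1)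
    (Y : ℝ → Fin N → ℝ)
    (hY : ∀ Δt, 0 < Δt → Δt < T → ∀ i,
      Y Δt i = yn i + Δt * ∑ j,
        (p i j yn * Y Δt j / σ Δt j - d i j yn * Y Δt i / σ Δt i)) :
    ∀ i, BigOAtZero (fun Δt => Y Δt i - y (tn + Δt) i) 2 := by
  set F : (Fin N → ℝ) → Fin N → ℝ := fun z i => P i z - D i z
  have hF : ContDiff ℝ 1 F := contDiff_pi.2 fun i => by
    simp only [F, hP, hD]
    exact (ContDiff.sum fun j _ => hpC1 i j).sub (ContDiff.sum fun j _ => hdC1 i j)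
  have hyn₀ : ∀ i, yn i ≠ 0 := fun i => (hynpos i).ne'
  have hFyn : F yn = patankarRhs (fun i j => p i j yn) (fun i j => d i j yn) yn yn := by
    rw [patankarRhs_self _ _ hyn₀]
    ext i
    simp only [F, hP, hD, Finset.sum_sub_distrib]
  have hexact := isBigO_sub_sub_smul_of_hasDerivWithinAt hF hT fun t ht =>
    hasDerivWithinAt_pi.2 fun i => hy i t ht
  rw [hyn, hFyn] at hexact
  have hscheme := isBigO_mprk_sub_sub_smul hyn₀
    (isBigO_pi.2 fun i => (bigOAtZero_iff_isBigO.1 (hσO i)).congr_right fun t => pow_one t)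
    (eventually_of_mem (Ioo_mem_nhdsGT hT) fun t ht => funext (hY t ht.1 ht.2))
  have herr : (fun t => Y t - y (tn + t)) =O[𝓝[>] 0] fun t => t ^ 2 :=
    (hscheme.sub hexact).congr_left fun t => by abel
  exact fun i => bigOAtZero_iff_isBigO.2 (isBigO_pi.1 herr i)

theorem stmt_10 (N : ℕ) (hN : 1 ≤ N)
    (p d : Fin N → Fin N → (Fin N → ℝ) → ℝ)
    (hpnn : ∀ i j z, 0 ≤ p i j z) (hdnn : ∀ i j z, 0 ≤ d i j z)
    (hpC1 : ∀ i j, ContDiff ℝ 1 (p i j)) (hdC1 : ∀ i j, ContDiff ℝ 1 (d i j))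
    (hcons : ∀ i j z, p i j z = d j i z)
    (hpdiag : ∀ i z, p i i z = 0) (hddiag : ∀ i z, d i i z = 0)
    (P D : Fin N → (Fin N → ℝ) → ℝ)
    (hP : ∀ i z, P i z = ∑ j, p i j z) (hD : ∀ i z, D i z = ∑ j, d i j z)
    (tn T : ℝ) (hT : 0 < T)
    (y : ℝ → Fin N → ℝ)
    (hy : ∀ (i : Fin N), ∀ t ∈ Set.Icc tn (tn + T),
      HasDerivWithinAt (fun s => y s i) (P i (y t) - D i (y t)) (Set.Icc tn (tn + T)) t)
    (yn : Fin N → ℝ) (hyn : y tn = yn) (hynpos : ∀ i, 0 < yn i)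
    (σ : ℝ → Fin N → ℝ)
    (hσpos : ∀ Δt, 0 < Δt → Δt < T → ∀ i, 0 < σ Δt i)
    (hσO : ∀ i, BigOAtZero (fun Δt => σ Δt i - yn i) 1)
    (Y : ℝ → Fin N → ℝ)
    (hY : ∀ Δt, 0 < Δt → Δt < T → ∀ i,
      Y Δt i = yn i + Δt * ∑ j,
        (p i j yn * Y Δt j / σ Δt j - d i j yn * Y Δt i / σ Δt i)) :
    ∀ i, BigOAtZero (fun Δt => Y Δt i - y (tn + Δt) i) 2 :=
  stmt_10_general N p d hpC1 hdC1 P D hP hD tn T hT y hy yn hyn hynpos σ hσO Y hY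
end

section
/- Consider the two-component production–destruction system y_1' = −y_1, y_2' = y_1, whose only nonzero rates are p_{21}(y) = d_{12}(y) = y_1. Fix yⁿ ∈ ℝ² with yⁿ_1, yⁿ_2 > 0. Suppose σ : (0,∞) → ℝ² takes positive values and Y : (0,∞) → ℝ² satisfies, for every Δt > 0, the modified Patankar–Euler relations Y_1(Δt) = yⁿ_1 − Δt·yⁿ_1·Y_1(Δt)/σ_1(Δt) and Y_2(Δt) = yⁿ_2 + Δt·yⁿ_1·Y_1(Δt)/σ_1(Δt). If Y_1(Δt) = yⁿ_1 − Δt·yⁿ_1 + O(Δt²) as Δt → 0⁺ (first-order accuracy in the first component), then σ_1(Δt) = yⁿ_1 + O(Δt) as Δt → 0⁺. (The condition σ_i = yⁿ_i + O(Δt) is necessary for first-order accuracy of the one-stage MPRK scheme.) -/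
theorem stmt_11 (yn1 yn2 : ℝ) (h1 : 0 < yn1) (h2 : 0 < yn2)
    (σ1 σ2 : ℝ → ℝ)
    (hσ1 : ∀ Δt, 0 < Δt → 0 < σ1 Δt) (hσ2 : ∀ Δt, 0 < Δt → 0 < σ2 Δt)
    (Y1 Y2 : ℝ → ℝ)
    (hY1 : ∀ Δt, 0 < Δt → Y1 Δt = yn1 - Δt * yn1 * Y1 Δt / σ1 Δt)
    (hY2 : ∀ Δt, 0 < Δt → Y2 Δt = yn2 + Δt * yn1 * Y1 Δt / σ1 Δt)
    (hacc : BigOAtZero (fun Δt => Y1 Δt - (yn1 - Δt * yn1)) 2) :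
    BigOAtZero (fun Δt => σ1 Δt - yn1) 1 := by
  obtain ⟨C, hC, δ0, hδ0, hb⟩ := hacc
  refine ⟨4*C + 2*yn1, by positivity, min δ0 (min (yn1/(2*C)) 1), by positivity, ?_⟩
  intro t ht htδ
  have ht1 : t < δ0 := lt_of_lt_of_le htδ (min_le_left _ _)
  have ht2 : t ≤ yn1/(2*C) :=
    le_of_lt (lt_of_lt_of_le htδ (le_trans (min_le_right _ _) (min_le_left _ _)))
  have ht3 : t ≤ 1 :=
    le_of_lt (lt_of_lt_of_le htδ (le_trans (min_le_right _ _) (min_le_right _ _)))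
  have hct : 2*C*t ≤ yn1 := by
    have := (le_div_iff₀ (by positivity : (0:ℝ) < 2*C)).mp ht2
    nlinarith [this]
  have hs : 0 < σ1 t := hσ1 t ht
  set s := σ1 t with hsdef
  have hs' : s ≠ 0 := ne_of_gt hs
  have hY := hY1 t ht
  have hY0 : t*yn1*Y1 t / s = yn1 - Y1 t := by
    show t*yn1*Y1 t / σ1 t = yn1 - Y1 t
    linarith
  have hY' : t*yn1*Y1 t = (yn1 - Y1 t) * s := (div_eq_iff hs').mp hY0
  have key : (Y1 t - (yn1 - t*yn1)) * (s + t*yn1) = t*yn1*(s - yn1 + t*yn1) := by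
    linear_combination hY'
  have hbound : |Y1 t - (yn1 - t*yn1)| ≤ C*t^2 := hb t ht ht1
  have hstpos : 0 < s + t*yn1 := by positivity
  have habs : t*yn1*|s - yn1 + t*yn1| ≤ C*t^2*(s + t*yn1) := by
    rw [show t*yn1*|s - yn1 + t*yn1| = |t*yn1*(s - yn1 + t*yn1)| by
      rw [abs_mul, abs_of_pos (by positivity : (0:ℝ) < t*yn1)]]
    rw [← key, abs_mul, abs_of_pos hstpos]
    exact mul_le_mul_of_nonneg_right hbound (le_of_lt hstpos)
  have hA1 : |s - yn1| ≤ |s - yn1 + t*yn1| + t*yn1 := by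
    calc |s - yn1| = |(s - yn1 + t*yn1) + (-(t*yn1))| := by ring_nf
    _ ≤ |s - yn1 + t*yn1| + |(-(t*yn1))| := abs_add_le _ _
    _ = |s - yn1 + t*yn1| + t*yn1 := by
        rw [abs_neg, abs_of_pos (by positivity : (0:ℝ) < t*yn1)]
  have hA2 : s - yn1 ≤ |s - yn1| := le_abs_self _
  have hEnn : 0 ≤ |s - yn1| := abs_nonneg _
  have h5 : 2*C*t * (t*|s - yn1|) ≤ yn1 * (t*|s - yn1|) :=
    mul_le_mul_of_nonneg_right hct (by positivity)
  have h6 : C*t^2 * (s - yn1) ≤ C*t^2 * |s - yn1| :=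
    mul_le_mul_of_nonneg_left hA2 (by positivity)
  have h7 : t*yn1*|s - yn1| ≤ t*yn1*(|s - yn1 + t*yn1| + t*yn1) :=
    mul_le_mul_of_nonneg_left hA1 (by positivity)
  have h8 : C*t^2*yn1*t ≤ C*t^2*yn1 :=
    (mul_le_of_le_one_right (by positivity) ht3)
  rw [pow_one]
  nlinarith [habs, h5, h6, h7, h8, mul_pos ht h1, hEnn]
end

section
/- Fix N ≥ 1, a real a21 > 0, a vector yⁿ ∈ ℝ^N with all yⁿ_i > 0, and nonnegative reals p_{ij}, d_{ij} (1 ≤ i,j ≤ N) with p_{ij} = d_{ji} and p_{ii} = d_{ii} = 0; set P_i = Σ_j p_{ij}, D_i = Σ_j d_{ij}. Suppose π : (0,∞) → ℝ^N takes positive values with π_i(Δt) = yⁿ_i + O(Δt) as Δt → 0⁺, and suppose Y2 : (0,∞) → ℝ^N satisfies, for every Δt > 0 and every i, Y2_i(Δt) = yⁿ_i + a21·Δt Σ_{j=1}^N ( p_{ij}·Y2_j(Δt)/π_j(Δt) − d_{ij}·Y2_i(Δt)/π_i(Δt) ). Then Y2_i(Δt) = yⁿ_i + a21·Δt·(P_i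 − D_i) + O(Δt²) as Δt → 0⁺ for every i. (Expansion of the second stage value of a two-stage MPRK scheme with conservative stage, δ = 1.) -/
set_option maxHeartbeats 2000000 in
theorem stmt_12 (N : ℕ) (hN : 1 ≤ N)
    (a21 : ℝ) (ha : 0 < a21)
    (yn : Fin N → ℝ) (hynpos : ∀ i, 0 < yn i)
    (p d : Fin N → Fin N → ℝ)
    (hp : ∀ i j, 0 ≤ p i j) (hd : ∀ i j, 0 ≤ d i j)
    (hcons : ∀ i j, p i j = d j i)
    (hpdiag : ∀ i, p i i = 0) (hddiag : ∀ i, d i i = 0)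
    (P D : Fin N → ℝ)
    (hP : ∀ i, P i = ∑ j, p i j) (hD : ∀ i, D i = ∑ j, d i j)
    (piw : ℝ → Fin N → ℝ)
    (hpiwpos : ∀ Δt, 0 < Δt → ∀ i, 0 < piw Δt i)
    (hpiwO : ∀ i, BigOAtZero (fun Δt => piw Δt i - yn i) 1)
    (Y2 : ℝ → Fin N → ℝ)
    (hY2 : ∀ Δt, 0 < Δt → ∀ i,
      Y2 Δt i = yn i + a21 * Δt * ∑ j,
        (p i j * Y2 Δt j / piw Δt j - d i j * Y2 Δt i / piw Δt i)) :
    ∀ i, BigOAtZero (fun Δt => Y2 Δt i - (yn i + a21 * Δt * (P i - D i))) 2 := by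
  classical
  have hNe : Nonempty (Fin N) := ⟨⟨0, hN⟩⟩
  have hne : (Finset.univ : Finset (Fin N)).Nonempty := Finset.univ_nonempty
  -- extract uniform constants from the big-O hypothesis on π
  choose C hCpos δ hδpos hCb using hpiwO
  set Cm : ℝ := ∑ j, C j with hCm_def
  have hCm_pos : 0 < Cm := Finset.sum_pos (fun j _ => hCpos j) hne
  have hCle : ∀ j, C j ≤ Cm :=
    fun j => Finset.single_le_sum (fun k _ => (hCpos k).le) (Finset.mem_univ j)
  set δm : ℝ := Finset.univ.inf' hne δ with hδm_def
  have hδm_pos : 0 < δm := (Finset.lt_inf'_iff hne).mpr (fun j _ => hδpos j)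
  have hδmle : ∀ j, δm ≤ δ j := fun j => Finset.inf'_le δ (Finset.mem_univ j)
  -- minimum of yn
  set m : ℝ := Finset.univ.inf' hne yn with hm_def
  have hm_pos : 0 < m := (Finset.lt_inf'_iff hne).mpr fun j _ => hynpos j
  have hmle : ∀ j, m ≤ yn j := fun j => Finset.inf'_le yn (Finset.mem_univ j)
  have hm2 : (0:ℝ) < m / 2 := by linarith
  -- totals
  set Ptot : ℝ := ∑ j, P j with hPtot_def
  have hPnn : ∀ j, 0 ≤ P j := fun j => by
    rw [hP]; exact Finset.sum_nonneg fun k _ => hp j k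
  have hDnn : ∀ j, 0 ≤ D j := fun j => by
    rw [hD]; exact Finset.sum_nonneg fun k _ => hd j k
  have hPtot_nn : 0 ≤ Ptot := Finset.sum_nonneg fun j _ => hPnn j
  have hPle : ∀ j, P j ≤ Ptot :=
    fun j => Finset.single_le_sum (fun k _ => hPnn k) (Finset.mem_univ j)
  set Dtot : ℝ := ∑ j, D j with hDtot_def
  have hDtot_nn : 0 ≤ Dtot := Finset.sum_nonneg fun j _ => hDnn j
  have hDle : ∀ j, D j ≤ Dtot :=
    fun j => Finset.single_le_sum (fun k _ => hDnn k) (Finset.mem_univ j)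
  -- δ0 : small enough for π bounds
  set δ0 : ℝ := min δm (m / (2 * Cm)) with hδ0_def
  have hδ0_pos : 0 < δ0 := lt_min hδm_pos (by positivity)
  have hpib : ∀ t : ℝ, 0 < t → t < δ0 → ∀ j, |piw t j - yn j| ≤ Cm * t := by
    intro t ht htδ j
    have h1 : t < δ j := lt_of_lt_of_le htδ ((min_le_left _ _).trans (hδmle j))
    have h2 := hCb j t ht h1
    simp only [pow_one] at h2
    calc |piw t j - yn j| ≤ C j * t := h2
      _ ≤ Cm * t := mul_le_mul_of_nonneg_right (hCle j) ht.le
  have hpil : ∀ t : ℝ, 0 < t → t < δ0 → ∀ j, m / 2 ≤ piw t j := by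
    intro t ht htδ j
    have h1 := hpib t ht htδ j
    have h2 : Cm * t ≤ m / 2 := by
      have h3 : t ≤ m / (2 * Cm) := le_of_lt (lt_of_lt_of_le htδ (min_le_right _ _))
      rw [le_div_iff₀ (by positivity)] at h3
      nlinarith
    have h4 := (abs_le.mp h1).1
    have := hmle j
    linarith
  -- δ1 : additionally small for nonnegativity
  set δ1 : ℝ := min δ0 (m / (2 * a21 * (Ptot + 1))) with hδ1_def
  have hδ1_pos : 0 < δ1 := lt_min hδ0_pos (by positivity)
  have hδ10 : δ1 ≤ δ0 := min_le_left _ _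
  -- nonnegativity of Y2
  have hY2nn : ∀ t : ℝ, 0 < t → t < δ1 → ∀ j, 0 ≤ Y2 t j := by
    intro t ht htδ
    by_contra hcon
    push_neg at hcon
    obtain ⟨j0, hj0⟩ := hcon
    obtain ⟨i0, _, hi0min⟩ := Finset.exists_min_image Finset.univ (Y2 t) hne
    have hi0neg : Y2 t i0 < 0 := lt_of_le_of_lt (hi0min j0 (Finset.mem_univ j0)) hj0
    have heq := hY2 t ht i0
    have hterm : ∀ j, p i0 j * ((2 / m) * Y2 t i0) ≤
        p i0 j * Y2 t j / piw t j - d i0 j * Y2 t i0 / piw t i0 := by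
      intro j
      have hπj := hpiwpos t ht j
      have hπi := hpiwpos t ht i0
      have hπjl := hpil t ht (lt_of_lt_of_le htδ hδ10) j
      have h1 : 0 ≤ - (d i0 j * Y2 t i0 / piw t i0) := by
        rw [neg_nonneg]
        apply div_nonpos_of_nonpos_of_nonneg _ hπi.le
        exact mul_nonpos_of_nonneg_of_nonpos (hd i0 j) hi0neg.le
      have hc1 : p i0 j / piw t j ≤ p i0 j * (2 / m) := by
        rw [div_le_iff₀ hπj]
        have hid : p i0 j * (2 / m) * (m / 2) = p i0 j := by field_simp
        have : p i0 j * (2 / m) * (m / 2) ≤ p i0 j * (2 / m) * piw t j :=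
          mul_le_mul_of_nonneg_left hπjl
            (mul_nonneg (hp i0 j) (by positivity))
        linarith
      have hstepA : p i0 j * ((2 / m) * Y2 t i0) ≤ p i0 j * Y2 t i0 / piw t j := by
        have := mul_le_mul_of_nonpos_right hc1 hi0neg.le
        calc p i0 j * ((2 / m) * Y2 t i0) = p i0 j * (2 / m) * Y2 t i0 := by ring
          _ ≤ p i0 j / piw t j * Y2 t i0 := this
          _ = p i0 j * Y2 t i0 / piw t j := by ring
      have hstepB : p i0 j * Y2 t i0 / piw t j ≤ p i0 j * Y2 t j / piw t j := by
        have hnum : p i0 j * Y2 t i0 ≤ p i0 j * Y2 t j :=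
          mul_le_mul_of_nonneg_left (hi0min j (Finset.mem_univ j)) (hp i0 j)
        exact div_le_div_of_nonneg_right hnum hπj.le
      linarith
    have hsum : P i0 * ((2 / m) * Y2 t i0) ≤
        ∑ j, (p i0 j * Y2 t j / piw t j - d i0 j * Y2 t i0 / piw t i0) := by
      calc P i0 * ((2 / m) * Y2 t i0) = ∑ j, p i0 j * ((2 / m) * Y2 t i0) := by
            rw [hP, Finset.sum_mul]
        _ ≤ _ := Finset.sum_le_sum fun j _ => hterm j
    set q : ℝ := a21 * t * ((2 / m) * Ptot) with hq_def
    have hq0 : 0 ≤ q := by positivity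
    have hq1 : q < 1 := by
      have h3 : t < m / (2 * a21 * (Ptot + 1)) := lt_of_lt_of_le htδ (min_le_right _ _)
      rw [lt_div_iff₀ (by positivity)] at h3
      have hqm : q * m = 2 * a21 * t * Ptot := by
        rw [hq_def]; field_simp
      nlinarith [mul_pos ha ht]
    have hge : q * Y2 t i0 ≤ a21 * t * (P i0 * ((2 / m) * Y2 t i0)) := by
      have h1 : Ptot * Y2 t i0 ≤ P i0 * Y2 t i0 :=
        mul_le_mul_of_nonpos_right (hPle i0) hi0neg.le
      have h2 : (2 / m) * (Ptot * Y2 t i0) ≤ (2 / m) * (P i0 * Y2 t i0) :=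
        mul_le_mul_of_nonneg_left h1 (by positivity)
      have h3 : (a21 * t) * ((2 / m) * (Ptot * Y2 t i0)) ≤
          (a21 * t) * ((2 / m) * (P i0 * Y2 t i0)) :=
        mul_le_mul_of_nonneg_left h2 (by positivity)
      calc q * Y2 t i0 = (a21 * t) * ((2 / m) * (Ptot * Y2 t i0)) := by rw [hq_def]; ring
        _ ≤ (a21 * t) * ((2 / m) * (P i0 * Y2 t i0)) := h3
        _ = a21 * t * (P i0 * ((2 / m) * Y2 t i0)) := by ring
    have hfin : yn i0 + q * Y2 t i0 ≤ Y2 t i0 := by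
      have := mul_le_mul_of_nonneg_left hsum (le_of_lt (by positivity : (0:ℝ) < a21 * t))
      linarith [heq]
    have := hynpos i0
    nlinarith
  -- conservation
  have hcsum : ∀ t : ℝ, 0 < t → ∑ j, Y2 t j = ∑ j, yn j := by
    intro t ht
    have h1 : ∑ i', ∑ j, p i' j * Y2 t j / piw t j
        = ∑ i', ∑ j, d i' j * Y2 t i' / piw t i' := by
      rw [Finset.sum_comm]
      exact Finset.sum_congr rfl fun j _ => Finset.sum_congr rfl fun i' _ => by rw [hcons]
    have hkey : ∑ i', ∑ j, (p i' j * Y2 t j / piw t j - d i' j * Y2 t i' / piw t i')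
        = 0 := by
      simp only [Finset.sum_sub_distrib]
      rw [h1, sub_self]
    calc ∑ j, Y2 t j
        = ∑ j, (yn j + a21 * t * ∑ k,
            (p j k * Y2 t k / piw t k - d j k * Y2 t j / piw t j)) :=
          Finset.sum_congr rfl fun j _ => hY2 t ht j
      _ = (∑ j, yn j) + a21 * t * ∑ j, ∑ k,
            (p j k * Y2 t k / piw t k - d j k * Y2 t j / piw t j) := by
          rw [Finset.sum_add_distrib, ← Finset.mul_sum]
      _ = ∑ j, yn j := by rw [hkey, mul_zero, add_zero]
  set S : ℝ := ∑ j, yn j with hS_def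
  have hS_pos : 0 < S := Finset.sum_pos (fun j _ => hynpos j) hne
  have hub : ∀ t : ℝ, 0 < t → t < δ1 → ∀ j, Y2 t j ≤ S := by
    intro t ht htδ j
    calc Y2 t j ≤ ∑ k, Y2 t k :=
          Finset.single_le_sum (fun k _ => hY2nn t ht htδ k) (Finset.mem_univ j)
      _ = S := hcsum t ht
  -- per-term first-order bounds on the sum in the scheme
  have htermbd : ∀ t : ℝ, 0 < t → t < δ1 → ∀ j k,
      |p j k * Y2 t k / piw t k - d j k * Y2 t j / piw t j|
        ≤ (p j k + d j k) * (2 * S / m) := by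
    intro t ht htδ j k
    have hπk := hpiwpos t ht k
    have hπj := hpiwpos t ht j
    have hπkl := hpil t ht (lt_of_lt_of_le htδ hδ10) k
    have hπjl := hpil t ht (lt_of_lt_of_le htδ hδ10) j
    have hA : 0 ≤ p j k * Y2 t k / piw t k :=
      div_nonneg (mul_nonneg (hp j k) (hY2nn t ht htδ k)) hπk.le
    have hB : 0 ≤ d j k * Y2 t j / piw t j :=
      div_nonneg (mul_nonneg (hd j k) (hY2nn t ht htδ j)) hπj.le
    have hA2 : p j k * Y2 t k / piw t k ≤ p j k * (2 * S / m) := by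
      rw [div_le_iff₀ hπk]
      have hid : p j k * (2 * S / m) * (m / 2) = p j k * S := by field_simp
      have h1 : p j k * (2 * S / m) * (m / 2) ≤ p j k * (2 * S / m) * piw t k :=
        mul_le_mul_of_nonneg_left hπkl (mul_nonneg (hp j k) (by positivity))
      have h2 : p j k * Y2 t k ≤ p j k * S :=
        mul_le_mul_of_nonneg_left (hub t ht htδ k) (hp j k)
      linarith
    have hB2 : d j k * Y2 t j / piw t j ≤ d j k * (2 * S / m) := by
      rw [div_le_iff₀ hπj]
      have hid : d j k * (2 * S / m) * (m / 2) = d j k * S := by field_simp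
      have h1 : d j k * (2 * S / m) * (m / 2) ≤ d j k * (2 * S / m) * piw t j :=
        mul_le_mul_of_nonneg_left hπjl (mul_nonneg (hd j k) (by positivity))
      have h2 : d j k * Y2 t j ≤ d j k * S :=
        mul_le_mul_of_nonneg_left (hub t ht htδ j) (hd j k)
      linarith
    have hsplit2 : (p j k + d j k) * (2 * S / m)
        = p j k * (2 * S / m) + d j k * (2 * S / m) := by ring
    rw [abs_le]
    constructor <;> linarith
  -- first-order bound
  set K1 : ℝ := a21 * ((Ptot + Dtot) * (2 * S / m)) with hK1_def
  have hK1nn : 0 ≤ K1 := by positivity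
  have h1st : ∀ t : ℝ, 0 < t → t < δ1 → ∀ j, |Y2 t j - yn j| ≤ K1 * t := by
    intro t ht htδ j
    have heq := hY2 t ht j
    set E : ℝ := ∑ k, (p j k * Y2 t k / piw t k - d j k * Y2 t j / piw t j) with hE_def
    have hEbd : |∑ k, (p j k * Y2 t k / piw t k - d j k * Y2 t j / piw t j)|
        ≤ (Ptot + Dtot) * (2 * S / m) := by
      calc |∑ k, (p j k * Y2 t k / piw t k - d j k * Y2 t j / piw t j)|
          ≤ ∑ k, |p j k * Y2 t k / piw t k - d j k * Y2 t j / piw t j| :=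
            Finset.abs_sum_le_sum_abs _ _
        _ ≤ ∑ k, (p j k + d j k) * (2 * S / m) :=
            Finset.sum_le_sum fun k _ => htermbd t ht htδ j k
        _ = (P j + D j) * (2 * S / m) := by
            rw [← Finset.sum_mul, Finset.sum_add_distrib, ← hP, ← hD]
        _ ≤ (Ptot + Dtot) * (2 * S / m) := by
            apply mul_le_mul_of_nonneg_right (add_le_add (hPle j) (hDle j))
            positivity
    have : Y2 t j - yn j = a21 * t *
        ∑ k, (p j k * Y2 t k / piw t k - d j k * Y2 t j / piw t j) := by
      linarith [heq]
    rw [this, abs_mul, abs_of_nonneg (by positivity : (0:ℝ) ≤ a21 * t)]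
    calc a21 * t * |∑ k, (p j k * Y2 t k / piw t k - d j k * Y2 t j / piw t j)|
        ≤ a21 * t * ((Ptot + Dtot) * (2 * S / m)) :=
          mul_le_mul_of_nonneg_left hEbd (by positivity)
      _ = K1 * t := by rw [hK1_def]; ring
  -- final second-order bound
  intro i
  refine ⟨a21 * ((Ptot + Dtot) * ((K1 + Cm) * (2 / m))) + 1, by positivity, δ1, hδ1_pos, ?_⟩
  intro t ht htδ
  have heq := hY2 t ht i
  have hπi := hpiwpos t ht i
  set M : ℝ := (K1 + Cm) * (2 / m) * t with hM_def
  have hMnn : 0 ≤ M := by positivity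
  have hratio : ∀ k, |(Y2 t k - piw t k) / piw t k| ≤ M := by
    intro k
    have hπk := hpiwpos t ht k
    have hπkl := hpil t ht (lt_of_lt_of_le htδ hδ10) k
    have h1 : |Y2 t k - piw t k| ≤ (K1 + Cm) * t := by
      have ha1 := h1st t ht htδ k
      have ha2 := hpib t ht (lt_of_lt_of_le htδ hδ10) k
      calc |Y2 t k - piw t k| = |(Y2 t k - yn k) - (piw t k - yn k)| := by ring_nf
        _ ≤ |Y2 t k - yn k| + |piw t k - yn k| := abs_sub _ _
        _ ≤ K1 * t + Cm * t := add_le_add ha1 ha2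
        _ = (K1 + Cm) * t := by ring
    rw [abs_div, abs_of_pos hπk, div_le_iff₀ hπk]
    have hid : M * (m / 2) = (K1 + Cm) * t := by rw [hM_def]; field_simp
    have h2 : M * (m / 2) ≤ M * piw t k := mul_le_mul_of_nonneg_left hπkl hMnn
    linarith
  have hsplit : ∀ k, p i k * Y2 t k / piw t k - d i k * Y2 t i / piw t i
      - (p i k - d i k)
      = p i k * ((Y2 t k - piw t k) / piw t k)
        - d i k * ((Y2 t i - piw t i) / piw t i) := by
    intro k
    have hπk := (hpiwpos t ht k).ne'
    have hπi' := hπi.ne'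
    field_simp
    ring
  have hEbd2 : |∑ k, (p i k * Y2 t k / piw t k - d i k * Y2 t i / piw t i)
      - (P i - D i)| ≤ (Ptot + Dtot) * M := by
    have hrw : (∑ k, (p i k * Y2 t k / piw t k - d i k * Y2 t i / piw t i))
        - (P i - D i)
        = ∑ k, (p i k * ((Y2 t k - piw t k) / piw t k)
            - d i k * ((Y2 t i - piw t i) / piw t i)) := by
      have hPD : P i - D i = ∑ k, (p i k - d i k) := by
        rw [hP, hD, Finset.sum_sub_distrib]
      rw [hPD, ← Finset.sum_sub_distrib]
      exact Finset.sum_congr rfl fun k _ => hsplit k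
    rw [hrw]
    calc |∑ k, (p i k * ((Y2 t k - piw t k) / piw t k)
            - d i k * ((Y2 t i - piw t i) / piw t i))|
        ≤ ∑ k, |p i k * ((Y2 t k - piw t k) / piw t k)
            - d i k * ((Y2 t i - piw t i) / piw t i)| := Finset.abs_sum_le_sum_abs _ _
      _ ≤ ∑ k, (p i k + d i k) * M := by
          apply Finset.sum_le_sum
          intro k _
          have h1 : |p i k * ((Y2 t k - piw t k) / piw t k)| ≤ p i k * M := by
            rw [abs_mul, abs_of_nonneg (hp i k)]
            exact mul_le_mul_of_nonneg_left (hratio k) (hp i k)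
          have h2 : |d i k * ((Y2 t i - piw t i) / piw t i)| ≤ d i k * M := by
            rw [abs_mul, abs_of_nonneg (hd i k)]
            exact mul_le_mul_of_nonneg_left (hratio i) (hd i k)
          calc |p i k * ((Y2 t k - piw t k) / piw t k)
              - d i k * ((Y2 t i - piw t i) / piw t i)|
              ≤ |p i k * ((Y2 t k - piw t k) / piw t k)|
                + |d i k * ((Y2 t i - piw t i) / piw t i)| := abs_sub _ _
            _ ≤ p i k * M + d i k * M := add_le_add h1 h2
            _ = (p i k + d i k) * M := by ring
      _ = (P i + D i) * M := by
          rw [← Finset.sum_mul, Finset.sum_add_distrib, ← hP, ← hD]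
      _ ≤ (Ptot + Dtot) * M :=
          mul_le_mul_of_nonneg_right (add_le_add (hPle i) (hDle i)) hMnn
  have hfinal : Y2 t i - (yn i + a21 * t * (P i - D i))
      = a21 * t * ((∑ k, (p i k * Y2 t k / piw t k - d i k * Y2 t i / piw t i))
          - (P i - D i)) := by
    have h := heq
    have hexp : a21 * t * ((∑ k, (p i k * Y2 t k / piw t k - d i k * Y2 t i / piw t i))
        - (P i - D i))
        = a21 * t * (∑ k, (p i k * Y2 t k / piw t k - d i k * Y2 t i / piw t i))
          - a21 * t * (P i - D i) := by ring
    linarith [h, hexp]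
  show |Y2 t i - (yn i + a21 * t * (P i - D i))|
      ≤ (a21 * ((Ptot + Dtot) * ((K1 + Cm) * (2 / m))) + 1) * t ^ 2
  rw [hfinal, abs_mul, abs_of_nonneg (by positivity : (0:ℝ) ≤ a21 * t)]
  have h3 : a21 * t * |(∑ k, (p i k * Y2 t k / piw t k - d i k * Y2 t i / piw t i))
      - (P i - D i)| ≤ a21 * t * ((Ptot + Dtot) * M) :=
    mul_le_mul_of_nonneg_left hEbd2 (by positivity)
  have h4 : a21 * t * ((Ptot + Dtot) * M)
      = a21 * ((Ptot + Dtot) * ((K1 + Cm) * (2 / m))) * t ^ 2 := by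
    rw [hM_def]; ring
  have h5 : a21 * ((Ptot + Dtot) * ((K1 + Cm) * (2 / m))) * t ^ 2
      ≤ (a21 * ((Ptot + Dtot) * ((K1 + Cm) * (2 / m))) + 1) * t ^ 2 := by
    nlinarith [sq_nonneg t]
  linarith
end

section
/- Fix N ≥ 1, a real a21 > 0, a vector yⁿ ∈ ℝ^N with all yⁿ_i > 0, and nonnegative reals P_i, D_i (i = 1,…,N). Suppose π : (0,∞) → ℝ^N takes positive values with π_i(Δt) = yⁿ_i + O(Δt) as Δt → 0⁺, and define Y2 : (0,∞) → ℝ^N by Y2_i(Δt) = (yⁿ_i + a21·Δt·P_i) / (1 + a21·Δt·D_i/π_i(Δt)). Then Y2_i(Δt)/π_i(Δt) = 1 + O(Δt) and Y2_i(Δt) = yⁿ_i + a21·Δt·(P_i − D_i) + O(Δt²) as Δt → 0⁺ for every i. (Expansion of the second stage value of a two-stage MPRK scheme with non-conservative stage, δ = 0.) -/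
theorem stmt_13 (N : ℕ) (hN : 1 ≤ N)
    (a21 : ℝ) (ha : 0 < a21)
    (yn : Fin N → ℝ) (hynpos : ∀ i, 0 < yn i)
    (P D : Fin N → ℝ) (hP : ∀ i, 0 ≤ P i) (hD : ∀ i, 0 ≤ D i)
    (piw : ℝ → Fin N → ℝ)
    (hpiwpos : ∀ Δt, 0 < Δt → ∀ i, 0 < piw Δt i)
    (hpiwO : ∀ i, BigOAtZero (fun Δt => piw Δt i - yn i) 1)
    (Y2 : ℝ → Fin N → ℝ)
    (hY2 : ∀ Δt, 0 < Δt → ∀ i,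
      Y2 Δt i = (yn i + a21 * Δt * P i) / (1 + a21 * Δt * D i / piw Δt i)) :
    (∀ i, BigOAtZero (fun Δt => Y2 Δt i / piw Δt i - 1) 1) ∧
    (∀ i, BigOAtZero (fun Δt => Y2 Δt i - (yn i + a21 * Δt * (P i - D i))) 2) := by
  constructor
  · intro i
    obtain ⟨C, hC, δ, hδ, hb⟩ := hpiwO i
    have hy := hynpos i
    have hCa : 0 < C + a21 * (P i + D i) := by nlinarith [hP i, hD i]
    refine ⟨(C + a21 * (P i + D i)) * (2 / yn i),
      mul_pos hCa (div_pos two_pos hy),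
      min δ (yn i / (2 * C)), lt_min hδ (div_pos hy (by linarith)), ?_⟩
    intro t ht htδ
    have hπ := hpiwpos t ht i
    have hat : 0 < a21 * t := mul_pos ha ht
    have hbt : |piw t i - yn i| ≤ C * t := by
      simpa using hb t ht (lt_of_lt_of_le htδ (min_le_left _ _))
    have hCt : C * t < yn i / 2 := by
      have h2 : t < yn i / (2 * C) := lt_of_lt_of_le htδ (min_le_right _ _)
      have := (lt_div_iff₀ (by linarith : (0:ℝ) < 2 * C)).mp h2
      linarith
    have hπhalf : yn i / 2 < piw t i := by
      have := abs_le.mp hbt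
      linarith [this.1]
    have hd0 : 0 ≤ a21 * t * D i := mul_nonneg hat.le (hD i)
    have hden : 0 < piw t i + a21 * t * D i := by linarith
    have hdnz : (1 : ℝ) + a21 * t * D i / piw t i ≠ 0 := by
      have : 0 ≤ a21 * t * D i / piw t i := div_nonneg hd0 hπ.le
      linarith
    have key : Y2 t i / piw t i - 1 =
        ((yn i - piw t i) + a21 * t * (P i - D i)) / (piw t i + a21 * t * D i) := by
      rw [hY2 t ht i]
      field_simp
      ring
    have hPD : |P i - D i| ≤ P i + D i :=
      abs_le.mpr ⟨by linarith [hP i, hD i], by linarith [hP i, hD i]⟩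
    have hnum : |(yn i - piw t i) + a21 * t * (P i - D i)| ≤ (C + a21 * (P i + D i)) * t := by
      calc |(yn i - piw t i) + a21 * t * (P i - D i)|
          ≤ |yn i - piw t i| + |a21 * t * (P i - D i)| := abs_add_le _ _
        _ ≤ C * t + a21 * t * (P i + D i) := by
            rw [abs_sub_comm, abs_mul, abs_of_pos hat]
            have := mul_le_mul_of_nonneg_left hPD hat.le
            linarith
        _ = (C + a21 * (P i + D i)) * t := by ring
    simp only [key, abs_div, abs_of_pos hden]
    calc |(yn i - piw t i) + a21 * t * (P i - D i)| / (piw t i + a21 * t * D i)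
        ≤ ((C + a21 * (P i + D i)) * t) / (yn i / 2) := by
          apply div_le_div₀ (mul_nonneg hCa.le ht.le) hnum (half_pos hy)
          linarith
      _ = (C + a21 * (P i + D i)) * (2 / yn i) * t ^ 1 := by
          field_simp
  · intro i
    obtain ⟨C, hC, δ, hδ, hb⟩ := hpiwO i
    have hy := hynpos i
    have hCa : 0 < C + a21 * (P i + D i) := by nlinarith [hP i, hD i]
    have hD1 : 0 < D i + 1 := by linarith [hD i]
    refine ⟨a21 * (D i + 1) * (C + a21 * (P i + D i)) * (2 / yn i),
      mul_pos (mul_pos (mul_pos ha hD1) hCa) (div_pos two_pos hy),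
      min δ (yn i / (2 * C)), lt_min hδ (div_pos hy (by linarith)), ?_⟩
    intro t ht htδ
    have hπ := hpiwpos t ht i
    have hat : 0 < a21 * t := mul_pos ha ht
    have hbt : |piw t i - yn i| ≤ C * t := by
      simpa using hb t ht (lt_of_lt_of_le htδ (min_le_left _ _))
    have hCt : C * t < yn i / 2 := by
      have h2 : t < yn i / (2 * C) := lt_of_lt_of_le htδ (min_le_right _ _)
      have := (lt_div_iff₀ (by linarith : (0:ℝ) < 2 * C)).mp h2
      linarith
    have hπhalf : yn i / 2 < piw t i := by
      have := abs_le.mp hbt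
      linarith [this.1]
    have hd0 : 0 ≤ a21 * t * D i := mul_nonneg hat.le (hD i)
    have hden : 0 < piw t i + a21 * t * D i := by linarith
    have hdnz : (1 : ℝ) + a21 * t * D i / piw t i ≠ 0 := by
      have : 0 ≤ a21 * t * D i / piw t i := div_nonneg hd0 hπ.le
      linarith
    have key : Y2 t i - (yn i + a21 * t * (P i - D i)) =
        a21 * t * D i * ((piw t i - yn i) - a21 * t * (P i - D i))
          / (piw t i + a21 * t * D i) := by
      rw [hY2 t ht i]
      field_simp
      ring
    have hPD : |P i - D i| ≤ P i + D i :=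
      abs_le.mpr ⟨by linarith [hP i, hD i], by linarith [hP i, hD i]⟩
    have hnum : |a21 * t * D i * ((piw t i - yn i) - a21 * t * (P i - D i))|
        ≤ a21 * (D i + 1) * (C + a21 * (P i + D i)) * t ^ 2 := by
      rw [abs_mul, abs_of_nonneg hd0]
      have h1 : |(piw t i - yn i) - a21 * t * (P i - D i)|
          ≤ (C + a21 * (P i + D i)) * t := by
        calc |(piw t i - yn i) - a21 * t * (P i - D i)|
            ≤ |piw t i - yn i| + |a21 * t * (P i - D i)| := abs_sub _ _
          _ ≤ C * t + a21 * t * (P i + D i) := by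
              rw [abs_mul, abs_of_pos hat]
              have := mul_le_mul_of_nonneg_left hPD hat.le
              linarith
          _ = (C + a21 * (P i + D i)) * t := by ring
      have h2 : a21 * t * D i * |(piw t i - yn i) - a21 * t * (P i - D i)|
          ≤ a21 * t * D i * ((C + a21 * (P i + D i)) * t) :=
        mul_le_mul_of_nonneg_left h1 hd0
      have hpos : 0 ≤ a21 * (C + a21 * (P i + D i)) * t ^ 2 :=
        mul_nonneg (mul_nonneg ha.le hCa.le) (pow_nonneg ht.le 2)
      linarith [h2, hpos]
    simp only [key, abs_div, abs_of_pos hden]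
    calc |a21 * t * D i * ((piw t i - yn i) - a21 * t * (P i - D i))|
          / (piw t i + a21 * t * D i)
        ≤ (a21 * (D i + 1) * (C + a21 * (P i + D i)) * t ^ 2) / (yn i / 2) := by
          apply div_le_div₀ (abs_nonneg _ |>.trans hnum) hnum (half_pos hy)
          linarith
      _ = a21 * (D i + 1) * (C + a21 * (P i + D i)) * (2 / yn i) * t ^ 2 := by
          field_simp
end

section
/- Let N ≥ 1 and let p_{ij}, d_{ij} : ℝ^N → ℝ (1 ≤ i,j ≤ N) be nonnegative, twice continuously differentiable functions with p_{ij}(z) = d_{ji}(z) and p_{ii}(z) = d_{ii}(z) = 0 for all z. Set P_i = Σ_j p_{ij}, D_i = Σ_j d_{ij}. Let y : [t_n, t_n + T] → ℝ^N solve y_i' = P_i(y) − D_i(y) with y(t_n) = yⁿ, all yⁿ_i > 0. Suppose Y2, Y : (0,T) → ℝ^N satisfy, for every Δt ∈ (0,T) and every i: Y2_i(Δt) > 0, Y2_i = yⁿ_i + Δt Σ_j ( p_{ij}(yⁿ)·Y2_j/yⁿ_j − d_{ij}(yⁿ)·Y2_i/yⁿ_i ), and Y_i = yⁿ_i + (Δt/2)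 Σ_j ( (p_{ij}(yⁿ) + p_{ij}(Y2))·Y_j/Y2_j − (d_{ij}(yⁿ) + d_{ij}(Y2))·Y_i/Y2_i ). Then Y_i(Δt) = y_i(t_n + Δt) + O(Δt³) as Δt → 0⁺ for every i. (The original modified Patankar–Runge–Kutta scheme of Burchard, Deleersnijder and Meister, i.e. the two-stage MPRK scheme with a21 = 1, b1 = b2 = 1/2, π_i = yⁿ_i and σ_i = y^{(2)}_i, is second order accurate.) -/
open Asymptotics Filter Topology Set

theorem BigOAtZero.of_isBigO {f : ℝ → ℝ} {m : ℕ} (hf : f =O[𝓝[>] 0] (· ^ m)) :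
    BigOAtZero f m := by
  obtain ⟨C, hC, hCf⟩ := hf.exists_pos
  obtain ⟨δ, hδ, hsub⟩ := mem_nhdsGT_iff_exists_Ioo_subset.1 hCf.bound
  refine ⟨C, hC, δ, hδ, fun t ht htδ => ?_⟩
  simpa [abs_of_pos ht] using hsub ⟨ht, htδ⟩

theorem isBigO_apply_of_norm_le {α E F : Type*} [Norm E] [Norm F] {l : Filter α}
    {A : α → E → F} {K : ℝ} (hA : ∀ᶠ a in l, ∀ z, ‖A a z‖ ≤ K * ‖z‖) (u : α → E) :
    (fun a => A a (u a)) =O[l] u :=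
  IsBigO.of_bound K (hA.mono fun _ ha => ha _)

section Asymptotics

variable {E F : Type*} [NormedAddCommGroup E] [NormedSpace ℝ E]
  [NormedAddCommGroup F] [NormedSpace ℝ F]

theorem Asymptotics.IsBigO.id_smul {l : Filter ℝ} {u : ℝ → E} {k : ℕ} (hu : u =O[l] (· ^ k)) :
    (fun h => h • u h) =O[l] (· ^ (k + 1)) :=
  ((isBigO_refl id l).smul hu).congr_right fun h => by simp [pow_succ, mul_comm]

theorem ContDiffAt.isBigO_comp_sub_comp {α : Type*} {l : Filter α} {f : E → F} {x₀ : E}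
    (hf : ContDiffAt ℝ 1 f x₀) {u v : α → E} (hu : Tendsto u l (𝓝 x₀))
    (hv : Tendsto v l (𝓝 x₀)) :
    (fun a => f (u a) - f (v a)) =O[l] fun a => u a - v a := by
  obtain ⟨K, t, ht, hK⟩ := hf.exists_lipschitzOnWith
  refine IsBigO.of_bound K ?_
  filter_upwards [hu ht, hv ht] with a hua hva using hK.norm_sub_le hua hva

theorem isBigO_sub_pow_succ_of_hasDerivWithinAt {e e' : ℝ → E} {c : ℝ} {k : ℕ} (hc : 0 < c)
    (he : ∀ x ∈ Icc 0 c, HasDerivWithinAt e (e' x) (Icc 0 c) x)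
    (he' : e' =O[𝓝[≥] 0] (· ^ k)) :
    (fun t => e t - e 0) =O[𝓝[≥] 0] (· ^ (k + 1)) := by
  obtain ⟨C, hC, hCe⟩ := he'.exists_pos
  obtain ⟨ε, hε, hsub⟩ := mem_nhdsGE_iff_exists_Ico_subset.1 hCe.bound
  refine IsBigO.of_bound C ?_
  filter_upwards [Ico_mem_nhdsGE (lt_min hε hc)] with t ⟨ht0, htε⟩
  have hsub' : Icc 0 t ⊆ Icc 0 c := Icc_subset_Icc_right (htε.le.trans (min_le_right _ _))
  have hbound : ∀ x ∈ Icc 0 t, ‖e' x‖ ≤ C * t ^ k := fun x hx => by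
    have hx' : ‖e' x‖ ≤ C * ‖x ^ k‖ :=
      hsub ⟨hx.1, hx.2.trans_lt (htε.trans_le (min_le_left _ _))⟩
    rw [Real.norm_of_nonneg (pow_nonneg hx.1 k)] at hx'
    exact hx'.trans (mul_le_mul_of_nonneg_left (pow_le_pow_left₀ hx.1 hx.2 k) hC.le)
  have hmvt := (convex_Icc 0 t).norm_image_sub_le_of_norm_hasDerivWithin_le
    (fun x hx => (he x (hsub' hx)).mono hsub') hbound ⟨le_rfl, ht0⟩ ⟨ht0, le_rfl⟩
  rw [sub_zero, Real.norm_of_nonneg ht0] at hmvt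
  rw [Real.norm_of_nonneg (pow_nonneg ht0 _), pow_succ, ← mul_assoc]
  exact hmvt

theorem isBigO_of_eq_add_smul {l : Filter ℝ} (hl : l ≤ 𝓝 0) {A : ℝ → E → E} {K : ℝ}
    (hA : ∀ᶠ h in l, ∀ z, ‖A h z‖ ≤ K * ‖z‖) {x v : ℝ → E}
    (hx : ∀ᶠ h in l, x h = v h + h • A h (x h)) : x =O[l] v := by
  have hsmall : ∀ᶠ h in l, |h| * K < 1 / 2 := by
    have : Tendsto (fun h : ℝ => |h| * K) l (𝓝 0) := by
      have hc : Continuous fun h : ℝ => |h| * K := by fun_prop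
      simpa using (hc.tendsto 0).mono_left hl
    exact this.eventually (gt_mem_nhds (by norm_num))
  refine IsBigO.of_bound 2 ?_
  filter_upwards [hA, hx, hsmall] with h hAh hxh hh
  have hle : ‖x h‖ ≤ ‖v h‖ + |h| * K * ‖x h‖ := by
    calc ‖x h‖ = ‖v h + h • A h (x h)‖ := by rw [← hxh]
      _ ≤ ‖v h‖ + ‖h‖ * ‖A h (x h)‖ := (norm_add_le _ _).trans_eq (by rw [norm_smul])
      _ ≤ ‖v h‖ + |h| * (K * ‖x h‖) := by
        gcongr
        exacts [(Real.norm_eq_abs h).le, hAh _]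
      _ = ‖v h‖ + |h| * K * ‖x h‖ := by ring
  nlinarith [norm_nonneg (x h)]

end Asymptotics

section Heun

variable {E : Type*} [NormedAddCommGroup E] [NormedSpace ℝ E] {f : E → E}

theorem ContDiff.isBigO_line_taylor (hf : ContDiff ℝ 2 f) (y v : E) :
    (fun s : ℝ => f (y + s • v) - f y - s • fderiv ℝ f y v) =O[𝓝[≥] 0] (· ^ 2) := by
  have hD : ContDiff ℝ 1 fun z => fderiv ℝ f z v :=
    (hf.fderiv_right (by norm_num)).clm_apply contDiff_const
  have hline : Tendsto (fun s : ℝ => y + s • v) (𝓝[≥] 0) (𝓝 y) := by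
    have : Continuous fun s : ℝ => y + s • v := by fun_prop
    simpa using (this.tendsto 0).mono_left nhdsWithin_le_nhds
  have hderiv : ∀ s ∈ Icc (0 : ℝ) 1,
      HasDerivWithinAt (fun s : ℝ => f (y + s • v) - s • fderiv ℝ f y v)
        (fderiv ℝ f (y + s • v) v - fderiv ℝ f y v) (Icc 0 1) s := by
    intro s _
    have hl : HasDerivAt (fun s : ℝ => y + s • v) v s := by
      simpa using ((hasDerivAt_id s).smul_const v).const_add y
    exact (((hf.differentiable (by norm_num) _).hasFDerivAt.comp_hasDerivAt s hl).sub
      (by simpa using (hasDerivAt_id s).smul_const (fderiv ℝ f y v))).hasDerivWithinAt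
  have hD' : (fun s : ℝ => fderiv ℝ f (y + s • v) v - fderiv ℝ f y v) =O[𝓝[≥] 0] (· ^ 1) := by
    refine ((hD.differentiable one_ne_zero y).hasFDerivAt.isBigO_sub.comp_tendsto hline).trans ?_
    exact IsBigO.of_bound ‖v‖ (Eventually.of_forall fun s => by simp [norm_smul, mul_comm])
  exact (isBigO_sub_pow_succ_of_hasDerivWithinAt one_pos hderiv hD').congr_left fun s => by
    simp only [zero_smul, add_zero, sub_zero]; abel

theorem isBigO_ode_solution_taylor (hf : ContDiff ℝ 2 f) {g : ℝ → E} {c : ℝ} (hc : 0 < c)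
    (hg : ∀ t ∈ Icc 0 c, HasDerivWithinAt g (f (g t)) (Icc 0 c) t) :
    (fun t => g t - g 0 - t • f (g 0) - (t ^ 2 / 2) • fderiv ℝ f (g 0) (f (g 0)))
      =O[𝓝[≥] 0] (· ^ 3) := by
  set F : E → E := fun z => fderiv ℝ f z (f z)
  have hF : ContDiff ℝ 1 F :=
    (hf.fderiv_right (by norm_num)).clm_apply (hf.of_le (by norm_num))
  have hgc : Tendsto g (𝓝[≥] 0) (𝓝 (g 0)) := by
    simpa [ContinuousWithinAt, nhdsWithin_Icc_eq_nhdsGE hc] using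
      (hg 0 ⟨le_rfl, hc.le⟩).continuousWithinAt
  have hg1 : (fun t => g t - g 0) =O[𝓝[≥] 0] (· ^ 1) := by
    refine isBigO_sub_pow_succ_of_hasDerivWithinAt hc hg ?_
    simpa using ((hf.continuous.tendsto _).comp hgc).isBigO_one ℝ
  have hFg : (fun t => F (g t) - F (g 0)) =O[𝓝[≥] 0] (· ^ 1) :=
    ((hF.differentiable one_ne_zero _).hasFDerivAt.isBigO_sub.comp_tendsto hgc).trans hg1
  have hfg : ∀ t ∈ Icc 0 c, HasDerivWithinAt (fun t => f (g t) - t • F (g 0))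
      (F (g t) - F (g 0)) (Icc 0 c) t := fun t ht =>
    ((hf.differentiable (by norm_num) _).hasFDerivAt.comp_hasDerivWithinAt t (hg t ht)).sub
      (by simpa using ((hasDerivAt_id t).smul_const (F (g 0))).hasDerivWithinAt)
  have hf2 : (fun t => f (g t) - f (g 0) - t • F (g 0)) =O[𝓝[≥] 0] (· ^ 2) :=
    (isBigO_sub_pow_succ_of_hasDerivWithinAt hc hfg hFg).congr_left fun t => by
    simp only [zero_smul, sub_zero]; abel
  have hg' : ∀ t ∈ Icc 0 c,
      HasDerivWithinAt (fun t => g t - t • f (g 0) - (t ^ 2 / 2) • F (g 0))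
        (f (g t) - f (g 0) - t • F (g 0)) (Icc 0 c) t := by
    intro t ht
    have hq : HasDerivAt (fun t : ℝ => (t ^ 2 / 2) • F (g 0)) (t • F (g 0)) t := by
      convert ((hasDerivAt_pow 2 t).div_const 2).smul_const (F (g 0)) using 2
      ring
    exact ((hg t ht).sub (by simpa using
      ((hasDerivAt_id t).smul_const (f (g 0))).hasDerivWithinAt)).sub hq.hasDerivWithinAt
  exact (isBigO_sub_pow_succ_of_hasDerivWithinAt hc hg' hf2).congr_left fun t => by
    simp only [zero_smul, sub_zero, ne_eq, OfNat.ofNat_ne_zero, not_false_eq_true, zero_pow,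
      zero_div]
    abel

noncomputable def heunStep (f : E → E) (y : E) (h : ℝ) : E := y + (h / 2) • (f y + f (y + h • f y))

theorem isBigO_heunStep_sub (hf : ContDiff ℝ 2 f) {g : ℝ → E} {c : ℝ} (hc : 0 < c)
    (hg : ∀ t ∈ Icc 0 c, HasDerivWithinAt g (f (g t)) (Icc 0 c) t) :
    (fun h => heunStep f (g 0) h - g h) =O[𝓝[≥] 0] (· ^ 3) := by
  have hline := ((hf.isBigO_line_taylor (g 0) (f (g 0))).const_smul_left (2⁻¹ : ℝ)).id_smul
  refine (hline.sub (isBigO_ode_solution_taylor hf hc hg)).congr_left fun h => ?_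
  simp only [heunStep, Pi.smul_apply]
  module

end Heun

section Patankar

variable {ι : Type*} [Fintype ι]

noncomputable def patankarOp (a b : ι → ι → ℝ) (σ : ι → ℝ) : (ι → ℝ) →ₗ[ℝ] ι → ℝ where
  toFun x i := ∑ j, (a i j * x j / σ j - b i j * x i / σ i)
  map_add' x y := by
    ext i
    simp only [Pi.add_apply, ← Finset.sum_add_distrib]
    exact Finset.sum_congr rfl fun j _ => by ring
  map_smul' r x := by
    ext i
    simp only [Pi.smul_apply, smul_eq_mul, RingHom.id_apply, Finset.mul_sum]
    exact Finset.sum_congr rfl fun j _ => by ring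

theorem patankarOp_apply_self {a b : ι → ι → ℝ} {σ : ι → ℝ} (hσ : ∀ i, σ i ≠ 0) :
    patankarOp a b σ σ = fun i => ∑ j, (a i j - b i j) := by
  ext i
  exact Finset.sum_congr rfl fun j _ => by simp [mul_div_assoc, div_self (hσ _)]

theorem norm_patankarOp_apply_le (a b : ι → ι → ℝ) (σ x : ι → ℝ) :
    ‖patankarOp a b σ x‖ ≤ Fintype.card ι * (‖a‖ + ‖b‖) * ‖σ⁻¹‖ * ‖x‖ := by
  have hterm : ∀ i j, |a i j * x j / σ j - b i j * x i / σ i| ≤ (‖a‖ + ‖b‖) * ‖σ⁻¹‖ * ‖x‖ := by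
    intro i j
    have h (c : ι → ι → ℝ) (k : ι) : |c i j * x k / σ k| ≤ ‖c‖ * ‖σ⁻¹‖ * ‖x‖ := by
      rw [div_eq_mul_inv, abs_mul, abs_mul, mul_right_comm]
      gcongr
      · exact (norm_le_pi_norm (c i) j).trans (norm_le_pi_norm c i)
      · exact norm_le_pi_norm σ⁻¹ k
      · exact norm_le_pi_norm x k
    calc _ ≤ |a i j * x j / σ j| + |b i j * x i / σ i| := abs_sub _ _
      _ ≤ _ := by linarith [h a j, h b i]
  refine (pi_norm_le_iff_of_nonneg (by positivity)).2 fun i => ?_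
  calc ‖patankarOp a b σ x i‖ ≤ ∑ j, |a i j * x j / σ j - b i j * x i / σ i| :=
        Finset.abs_sum_le_sum_abs _ _
    _ ≤ ∑ _j : ι, (‖a‖ + ‖b‖) * ‖σ⁻¹‖ * ‖x‖ := Finset.sum_le_sum fun j _ => hterm i j
    _ = _ := by simp [mul_assoc]

theorem eventually_norm_patankarOp_apply_le {α : Type*} {l : Filter α} {a b : α → ι → ι → ℝ}
    {σ : α → ι → ℝ} {a₀ b₀ : ι → ι → ℝ} {σ₀ : ι → ℝ} (ha : Tendsto a l (𝓝 a₀))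
    (hb : Tendsto b l (𝓝 b₀)) (hσ : Tendsto σ l (𝓝 σ₀)) (hσ₀ : ∀ i, σ₀ i ≠ 0) :
    ∃ K, ∀ᶠ s in l, ∀ x, ‖patankarOp (a s) (b s) (σ s) x‖ ≤ K * ‖x‖ := by
  have hσinv : Tendsto (fun s => (σ s)⁻¹) l (𝓝 σ₀⁻¹) :=
    tendsto_pi_nhds.2 fun i => ((continuous_apply i).tendsto _ |>.comp hσ).inv₀ (hσ₀ i)
  have hK := ((ha.norm.add hb.norm).const_mul (Fintype.card ι : ℝ)).mul hσinv.norm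
  refine ⟨_, (hK.eventually (gt_mem_nhds (lt_add_one _))).mono fun s hs x =>
    (norm_patankarOp_apply_le _ _ _ x).trans (mul_le_mul_of_nonneg_right hs.le (norm_nonneg x))⟩

end Patankar

section MPRK22

variable {ι : Type*} [Fintype ι] {p d : ι → ι → (ι → ℝ) → ℝ} {yn : ι → ℝ} {Y2 Y : ℝ → ι → ℝ}

def pdRHS (p d : ι → ι → (ι → ℝ) → ℝ) (z : ι → ℝ) : ι → ℝ := fun i => ∑ j, (p i j z - d i j z)

noncomputable def mprk22StageOp (p d : ι → ι → (ι → ℝ) → ℝ) (yn : ι → ℝ) :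
    (ι → ℝ) →ₗ[ℝ] ι → ℝ :=
  patankarOp (fun i j => p i j yn) (fun i j => d i j yn) yn

/-- The weights `b₁ = b₂ = 1/2` are folded into averaged production and destruction terms. -/
noncomputable def mprk22UpdateOp (p d : ι → ι → (ι → ℝ) → ℝ) (yn σ : ι → ℝ) :
    (ι → ℝ) →ₗ[ℝ] ι → ℝ :=
  patankarOp (fun i j => (p i j yn + p i j σ) / 2) (fun i j => (d i j yn + d i j σ) / 2) σ

theorem contDiff_pdRHS {n : WithTop ℕ∞} (hp : ∀ i j, ContDiff ℝ n (p i j))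
    (hd : ∀ i j, ContDiff ℝ n (d i j)) : ContDiff ℝ n (pdRHS p d) :=
  contDiff_pi.2 fun i => ContDiff.sum fun j _ => (hp i j).sub (hd i j)

theorem mprk22StageOp_apply_self (hyn : ∀ i, yn i ≠ 0) :
    mprk22StageOp p d yn yn = pdRHS p d yn :=
  patankarOp_apply_self hyn

theorem mprk22UpdateOp_apply_self {σ : ι → ℝ} (hσ : ∀ i, σ i ≠ 0) :
    mprk22UpdateOp p d yn σ σ = (2⁻¹ : ℝ) • (pdRHS p d yn + pdRHS p d σ) := by
  rw [mprk22UpdateOp, patankarOp_apply_self hσ]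
  ext i
  simp only [pdRHS, Pi.smul_apply, Pi.add_apply, smul_eq_mul, ← Finset.sum_add_distrib,
    Finset.mul_sum]
  exact Finset.sum_congr rfl fun j _ => by ring

theorem exists_eventually_norm_mprk22StageOp_le (hyn : ∀ i, yn i ≠ 0) :
    ∃ K, ∀ᶠ _h in 𝓝[>] (0 : ℝ), ∀ x, ‖mprk22StageOp p d yn x‖ ≤ K * ‖x‖ :=
  eventually_norm_patankarOp_apply_le tendsto_const_nhds tendsto_const_nhds
    tendsto_const_nhds hyn

theorem mprk22_stage_sub_init_isBigO (hyn : ∀ i, yn i ≠ 0)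
    (hY2 : ∀ᶠ h in 𝓝[>] 0, Y2 h = yn + h • mprk22StageOp p d yn (Y2 h)) :
    (fun h => Y2 h - yn) =O[𝓝[>] 0] (· ^ 1) := by
  obtain ⟨K, hK⟩ := exists_eventually_norm_mprk22StageOp_le (p := p) (d := d) hyn
  have hbdd : Y2 =O[𝓝[>] 0] (· ^ 0) :=
    (isBigO_of_eq_add_smul nhdsWithin_le_nhds hK hY2).trans
      (by simpa using isBigO_const_const yn (one_ne_zero (α := ℝ)) _)
  exact ((isBigO_apply_of_norm_le hK Y2).trans hbdd).id_smul.congr'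
    (hY2.mono fun h hh => eq_sub_iff_add_eq'.2 hh.symm) EventuallyEq.rfl

theorem mprk22_stage_tendsto (hyn : ∀ i, yn i ≠ 0)
    (hY2 : ∀ᶠ h in 𝓝[>] 0, Y2 h = yn + h • mprk22StageOp p d yn (Y2 h)) :
    Tendsto Y2 (𝓝[>] 0) (𝓝 yn) := by
  refine tendsto_sub_nhds_zero_iff.1 ((mprk22_stage_sub_init_isBigO hyn hY2).trans_tendsto ?_)
  exact ((continuous_pow 1).tendsto' 0 0 (by simp)).mono_left nhdsWithin_le_nhds

theorem mprk22_stage_sub_euler_isBigO (hyn : ∀ i, yn i ≠ 0)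
    (hY2 : ∀ᶠ h in 𝓝[>] 0, Y2 h = yn + h • mprk22StageOp p d yn (Y2 h)) :
    (fun h => Y2 h - (yn + h • pdRHS p d yn)) =O[𝓝[>] 0] (· ^ 2) := by
  obtain ⟨K, hK⟩ := exists_eventually_norm_mprk22StageOp_le (p := p) (d := d) hyn
  refine ((isBigO_apply_of_norm_le hK _).trans
    (mprk22_stage_sub_init_isBigO hyn hY2)).id_smul.congr' (hY2.mono fun h hh => ?_)
    EventuallyEq.rfl
  dsimp only
  rw [map_sub, mprk22StageOp_apply_self hyn, smul_sub]
  conv_rhs => rw [hh]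
  abel

theorem exists_eventually_norm_mprk22UpdateOp_le (hp : ∀ i j, Continuous (p i j))
    (hd : ∀ i j, Continuous (d i j)) (hyn : ∀ i, yn i ≠ 0)
    (hY2 : Tendsto Y2 (𝓝[>] 0) (𝓝 yn)) :
    ∃ K, ∀ᶠ h in 𝓝[>] 0, (∀ i, Y2 h i ≠ 0) ∧
      ∀ x, ‖mprk22UpdateOp p d yn (Y2 h) x‖ ≤ K * ‖x‖ := by
  have hcoef {q : ι → ι → (ι → ℝ) → ℝ} (hq : ∀ i j, Continuous (q i j)) :
      Tendsto (fun h i j => (q i j yn + q i j (Y2 h)) / 2) (𝓝[>] 0)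
        (𝓝 fun i j => (q i j yn + q i j yn) / 2) :=
    tendsto_pi_nhds.2 fun i => tendsto_pi_nhds.2 fun j =>
      (tendsto_const_nhds.add ((hq i j).tendsto yn |>.comp hY2)).div_const 2
  obtain ⟨K, hK⟩ := eventually_norm_patankarOp_apply_le (hcoef hp) (hcoef hd) hY2 hyn
  have hσ : ∀ᶠ h in 𝓝[>] 0, ∀ i, Y2 h i ≠ 0 := eventually_all.2 fun i =>
    ((continuous_apply i).tendsto yn |>.comp hY2).eventually_ne (hyn i)
  exact ⟨K, hσ.and hK⟩

theorem mprk22_update_sub_eq {σ x u : ι → ℝ} {h : ℝ} (hσ : ∀ i, σ i ≠ 0)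
    (hx : x = yn + h • mprk22UpdateOp p d yn σ x) :
    x - (yn + h • (2⁻¹ : ℝ) • (pdRHS p d yn + pdRHS p d u)) =
      h • (mprk22UpdateOp p d yn σ (x - σ) + (2⁻¹ : ℝ) • (pdRHS p d σ - pdRHS p d u)) := by
  rw [map_sub, mprk22UpdateOp_apply_self hσ]
  conv_lhs => rw [hx]
  module

theorem mprk22_update_sub_stage_isBigO (hp : ∀ i j, ContDiff ℝ 1 (p i j))
    (hd : ∀ i j, ContDiff ℝ 1 (d i j)) (hyn : ∀ i, yn i ≠ 0)
    (hY2 : ∀ᶠ h in 𝓝[>] 0, Y2 h = yn + h • mprk22StageOp p d yn (Y2 h))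
    (hY : ∀ᶠ h in 𝓝[>] 0, Y h = yn + h • mprk22UpdateOp p d yn (Y2 h) (Y h)) :
    (fun h => Y h - Y2 h) =O[𝓝[>] 0] (· ^ 2) := by
  have hY2yn := mprk22_stage_sub_init_isBigO hyn hY2
  have hY2lim := mprk22_stage_tendsto hyn hY2
  obtain ⟨K, hK⟩ := exists_eventually_norm_mprk22UpdateOp_le (fun i j => (hp i j).continuous)
    (fun i j => (hd i j).continuous) hyn hY2lim
  have hKop := hK.mono fun _ hh => hh.2
  have hYbdd : Y =O[𝓝[>] 0] (· ^ 0) :=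
    (isBigO_of_eq_add_smul nhdsWithin_le_nhds hKop hY).trans
      (by simpa using isBigO_const_const yn (one_ne_zero (α := ℝ)) _)
  have hYyn : (fun h => Y h - yn) =O[𝓝[>] 0] (· ^ 1) :=
    ((isBigO_apply_of_norm_le hKop Y).trans hYbdd).id_smul.congr'
      (hY.mono fun h hh => eq_sub_iff_add_eq'.2 hh.symm) EventuallyEq.rfl
  have hYY2 : (fun h => Y h - Y2 h) =O[𝓝[>] 0] (· ^ 1) :=
    (hYyn.sub hY2yn).congr_left fun h => sub_sub_sub_cancel_right _ _ _
  have hf : ContDiffAt ℝ 1 (pdRHS p d) yn := (contDiff_pdRHS hp hd).contDiffAt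
  have hinner : (fun h => mprk22UpdateOp p d yn (Y2 h) (Y h - Y2 h) +
      (2⁻¹ : ℝ) • (pdRHS p d (Y2 h) - pdRHS p d yn)) =O[𝓝[>] 0] (· ^ 1) :=
    ((isBigO_apply_of_norm_le hKop _).trans hYY2).add
      (((hf.isBigO_comp_sub_comp hY2lim tendsto_const_nhds).trans hY2yn).const_smul_left
        (2⁻¹ : ℝ))
  have hYeuler : (fun h => Y h - (yn + h • pdRHS p d yn)) =O[𝓝[>] 0] (· ^ 2) := by
    refine hinner.id_smul.congr' ?_ EventuallyEq.rfl
    filter_upwards [hY, hK] with h hh hh'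
    rw [← mprk22_update_sub_eq hh'.1 hh]
    module
  exact (hYeuler.sub (mprk22_stage_sub_euler_isBigO hyn hY2)).congr_left fun h =>
    sub_sub_sub_cancel_right _ _ _

theorem mprk22_update_sub_heunStep_isBigO (hp : ∀ i j, ContDiff ℝ 1 (p i j))
    (hd : ∀ i j, ContDiff ℝ 1 (d i j)) (hyn : ∀ i, yn i ≠ 0)
    (hY2 : ∀ᶠ h in 𝓝[>] 0, Y2 h = yn + h • mprk22StageOp p d yn (Y2 h))
    (hY : ∀ᶠ h in 𝓝[>] 0, Y h = yn + h • mprk22UpdateOp p d yn (Y2 h) (Y h)) :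
    (fun h => Y h - heunStep (pdRHS p d) yn h) =O[𝓝[>] 0] (· ^ 3) := by
  have hY2lim := mprk22_stage_tendsto hyn hY2
  obtain ⟨K, hK⟩ := exists_eventually_norm_mprk22UpdateOp_le (fun i j => (hp i j).continuous)
    (fun i j => (hd i j).continuous) hyn hY2lim
  have heuler : Tendsto (fun h : ℝ => yn + h • pdRHS p d yn) (𝓝[>] 0) (𝓝 yn) := by
    have : Continuous fun h : ℝ => yn + h • pdRHS p d yn := by fun_prop
    simpa using (this.tendsto 0).mono_left nhdsWithin_le_nhds
  have hf : ContDiffAt ℝ 1 (pdRHS p d) yn := (contDiff_pdRHS hp hd).contDiffAt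
  have hinner : (fun h => mprk22UpdateOp p d yn (Y2 h) (Y h - Y2 h) +
      (2⁻¹ : ℝ) • (pdRHS p d (Y2 h) - pdRHS p d (yn + h • pdRHS p d yn)))
        =O[𝓝[>] 0] (· ^ 2) :=
    ((isBigO_apply_of_norm_le (hK.mono fun _ hh => hh.2) _).trans
      (mprk22_update_sub_stage_isBigO hp hd hyn hY2 hY)).add
      (((hf.isBigO_comp_sub_comp hY2lim heuler).trans
        (mprk22_stage_sub_euler_isBigO hyn hY2)).const_smul_left (2⁻¹ : ℝ))
  refine hinner.id_smul.congr' ?_ EventuallyEq.rfl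
  filter_upwards [hY, hK] with h hh hh'
  rw [← mprk22_update_sub_eq hh'.1 hh, heunStep]
  module

end MPRK22

theorem stmt_17_general (N : ℕ)
    (p d : Fin N → Fin N → (Fin N → ℝ) → ℝ)
    (hpC2 : ∀ i j, ContDiff ℝ 2 (p i j)) (hdC2 : ∀ i j, ContDiff ℝ 2 (d i j))
    (P D : Fin N → (Fin N → ℝ) → ℝ)
    (hP : ∀ i z, P i z = ∑ j, p i j z) (hD : ∀ i z, D i z = ∑ j, d i j z)
    (tn T : ℝ) (hT : 0 < T)
    (y : ℝ → Fin N → ℝ)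
    (hy : ∀ (i : Fin N), ∀ t ∈ Set.Icc tn (tn + T),
      HasDerivWithinAt (fun s => y s i) (P i (y t) - D i (y t)) (Set.Icc tn (tn + T)) t)
    (yn : Fin N → ℝ) (hyn : y tn = yn) (hynpos : ∀ i, 0 < yn i)
    (Y2 Y : ℝ → Fin N → ℝ)
    (hY2 : ∀ Δt, 0 < Δt → Δt < T → ∀ i,
      Y2 Δt i = yn i + Δt * ∑ j,
        (p i j yn * Y2 Δt j / yn j - d i j yn * Y2 Δt i / yn i))
    (hY : ∀ Δt, 0 < Δt → Δt < T → ∀ i,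
      Y Δt i = yn i + Δt / 2 * ∑ j,
        ((p i j yn + p i j (Y2 Δt)) * Y Δt j / Y2 Δt j
          - (d i j yn + d i j (Y2 Δt)) * Y Δt i / Y2 Δt i)) :
    ∀ i, BigOAtZero (fun Δt => Y Δt i - y (tn + Δt) i) 3 := by
  have hode : ∀ t ∈ Icc 0 T, HasDerivWithinAt (fun s => y (tn + s))
      (pdRHS p d (y (tn + t))) (Icc 0 T) t := by
    intro t ht
    have hmaps : MapsTo (tn + ·) (Icc 0 T) (Icc tn (tn + T)) :=
      fun s hs => ⟨by linarith [hs.1], by linarith [hs.2]⟩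
    refine hasDerivWithinAt_pi.2 fun i => ?_
    have := (hy i (tn + t) (hmaps ht)).comp t ((hasDerivAt_id t).const_add tn).hasDerivWithinAt
      hmaps
    simpa [Function.comp_def, pdRHS, hP, hD, Finset.sum_sub_distrib] using this
  have hsmall : ∀ᶠ h in 𝓝[>] (0 : ℝ), h ∈ Ioo 0 T := Ioo_mem_nhdsGT hT
  have hstage : ∀ᶠ h in 𝓝[>] 0, Y2 h = yn + h • mprk22StageOp p d yn (Y2 h) :=
    hsmall.mono fun h hh => funext (hY2 h hh.1 hh.2)
  have hupdate : ∀ᶠ h in 𝓝[>] 0, Y h = yn + h • mprk22UpdateOp p d yn (Y2 h) (Y h) :=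
    hsmall.mono fun h hh => funext fun i => by
      rw [hY h hh.1 hh.2 i]
      simp only [mprk22UpdateOp, patankarOp, LinearMap.coe_mk, AddHom.coe_mk, Pi.add_apply,
        Pi.smul_apply, smul_eq_mul, Finset.mul_sum]
      exact congrArg (yn i + ·) (Finset.sum_congr rfl fun j _ => by ring)
  have hmprk := mprk22_update_sub_heunStep_isBigO (fun i j => (hpC2 i j).of_le one_le_two)
    (fun i j => (hdC2 i j).of_le one_le_two) (fun i => (hynpos i).ne') hstage hupdate
  have hheun := (isBigO_heunStep_sub (contDiff_pdRHS hpC2 hdC2) hT hode).mono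
    (nhdsWithin_mono _ Ioi_subset_Ici_self)
  have herr : (fun h => Y h - y (tn + h)) =O[𝓝[>] 0] (· ^ 3) :=
    (hmprk.add hheun).congr_left fun h => by simp [hyn]
  exact fun i => BigOAtZero.of_isBigO (isBigO_pi.1 herr i)

theorem stmt_17 (N : ℕ) (hN : 1 ≤ N)
    (p d : Fin N → Fin N → (Fin N → ℝ) → ℝ)
    (hpnn : ∀ i j z, 0 ≤ p i j z) (hdnn : ∀ i j z, 0 ≤ d i j z)
    (hpC2 : ∀ i j, ContDiff ℝ 2 (p i j)) (hdC2 : ∀ i j, ContDiff ℝ 2 (d i j))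
    (hcons : ∀ i j z, p i j z = d j i z)
    (hpdiag : ∀ i z, p i i z = 0) (hddiag : ∀ i z, d i i z = 0)
    (P D : Fin N → (Fin N → ℝ) → ℝ)
    (hP : ∀ i z, P i z = ∑ j, p i j z) (hD : ∀ i z, D i z = ∑ j, d i j z)
    (tn T : ℝ) (hT : 0 < T)
    (y : ℝ → Fin N → ℝ)
    (hy : ∀ (i : Fin N), ∀ t ∈ Set.Icc tn (tn + T),
      HasDerivWithinAt (fun s => y s i) (P i (y t) - D i (y t)) (Set.Icc tn (tn + T)) t)
    (yn : Fin N → ℝ) (hyn : y tn = yn) (hynpos : ∀ i, 0 < yn i)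
    (Y2 Y : ℝ → Fin N → ℝ)
    (hY2pos : ∀ Δt, 0 < Δt → Δt < T → ∀ i, 0 < Y2 Δt i)
    (hY2 : ∀ Δt, 0 < Δt → Δt < T → ∀ i,
      Y2 Δt i = yn i + Δt * ∑ j,
        (p i j yn * Y2 Δt j / yn j - d i j yn * Y2 Δt i / yn i))
    (hY : ∀ Δt, 0 < Δt → Δt < T → ∀ i,
      Y Δt i = yn i + Δt / 2 * ∑ j,
        ((p i j yn + p i j (Y2 Δt)) * Y Δt j / Y2 Δt j
          - (d i j yn + d i j (Y2 Δt)) * Y Δt i / Y2 Δt i)) :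
    ∀ i, BigOAtZero (fun Δt => Y Δt i - y (tn + Δt) i) 3 :=
  stmt_17_general N p d hpC2 hdC2 P D hP hD tn T hT y hy yn hyn hynpos Y2 Y hY2 hY
end
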